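/- arXiv:1005.3623 — 15 statements merged into one kernel-verified Lean document; each statement's English description precedes it below -/
import Mathlib

section
/- For all integers x0, x1, x2 satisfying x0*x1 + x0*x2 + x1*x2 = 0, there exist integers n, a, b such that x0 = -n*a*b, x1 = n*(a^2 + a*b), and x2 = n*(a*b + b^2). -/
/-! Write `(x1, x2) = d • (u, v)` with `u, v` coprime. The equation becomes
`x0 (u + v) = -d u v`, and since `u + v` is coprime to `u v`, it divides `d`;
writing `d = n (u + v)` gives the parametrization with `(a, b) = (u, v)`. -/

theorem IsCoprime.add_mul {R : Type*} [CommRing R] {u v : R} (h : IsCoprime u v) :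
    IsCoprime (u + v) (u * v) := by
  refine IsCoprime.mul_right ?_ ?_
  · simpa [add_comm] using h.symm.add_mul_left_left 1
  · simpa using h.add_mul_left_left 1

theorem exists_of_conic_of_isCoprime {R : Type*} [CommRing R] [IsDomain R] {x d u v : R}
    (huv : IsCoprime u v) (hd : d ≠ 0) (h : x * (u * d) + x * (v * d) + u * d * (v * d) = 0) :
    ∃ m, x = -(m * u * v) ∧ d = m * (u + v) := by
  have hx : x * (u + v) = -(d * (u * v)) := mul_left_cancel₀ hd (by linear_combination h)
  obtain ⟨m, rfl⟩ : u + v ∣ d := huv.add_mul.dvd_of_dvd_mul_right ⟨-x, by linear_combination hx⟩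
  have huv0 : u + v ≠ 0 := left_ne_zero_of_mul hd
  exact ⟨m, mul_right_cancel₀ huv0 (by linear_combination hx), by ring⟩

/-- Integral parametrization of the conic `x0*x1 + x0*x2 + x1*x2 = 0`:
every integer solution is of the form `n * (-a*b, a^2 + a*b, a*b + b^2)`. -/
theorem conic_parametrization (x0 x1 x2 : ℤ) (h : x0 * x1 + x0 * x2 + x1 * x2 = 0) :
    ∃ n a b : ℤ, x0 = -(n * a * b) ∧ x1 = n * (a ^ 2 + a * b) ∧ x2 = n * (a * b + b ^ 2) := by
  by_cases hzero : x1 = 0 ∧ x2 = 0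
  · obtain ⟨rfl, rfl⟩ := hzero
    exact ⟨x0, -1, 1, by ring, by ring, by ring⟩
  obtain ⟨d, u, v, hd, huv, rfl, rfl⟩ :=
    Int.exists_gcd_one' (Int.gcd_pos_iff.mpr (not_and_or.mp hzero))
  obtain ⟨n, hx0, hdn⟩ := exists_of_conic_of_isCoprime (Int.isCoprime_iff_gcd_eq_one.mpr huv)
    (by positivity) h
  exact ⟨n, u, v, hx0, by rw [hdn]; ring, by rw [hdn]; ring⟩
end

section
/- For any k-points P and Q of the twisted Hessian curve H, each of the triples s_0(P,Q), s_1(P,Q), s_2(P,Q) again satisfies the equation of H, i.e. writing (u,v,w) = s_i(P,Q) one has a*u^3 + v^3 + w^3 = d*u*v*w for i = 0, 1, 2. -/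
/-!
Writing `F(x, y, z) = a x³ + y³ + z³ - d x y z`, the form `F` evaluated at each addition law is
an explicit combination `A · F(P) + B · F(Q)` whose coefficients are values of the norm form
`α³ + a β³ + a² γ³ - 3 a α β γ` of `R[∛a]` (with `a = 1` for `s₀`), so it vanishes on the curve.
Moreover `s₂(P, Q) = -s₁(Q, P)`, and `F` is odd.
-/

/-- The twisted Hessian equation `a*X^3 + Y^3 + Z^3 = d*X*Y*Z`. -/
def hessianEq {k : Type*} [Field k] (a d u v w : k) : Prop :=
  a * u ^ 3 + v ^ 3 + w ^ 3 = d * u * v * w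

/-- The three bidegree (2,2) addition laws on the twisted Hessian curve,
as a `Fin 3`-indexed family of coordinate triples. -/
def hessianLaw {k : Type*} [Field k] (a x1 y1 z1 x2 y2 z2 : k) : Fin 3 → Fin 3 → k :=
  ![![x1 ^ 2 * y2 * z2 - y1 * z1 * x2 ^ 2,
     z1 ^ 2 * x2 * y2 - x1 * y1 * z2 ^ 2,
     y1 ^ 2 * x2 * z2 - x1 * z1 * y2 ^ 2],
    ![x1 * y1 * y2 ^ 2 - z1 ^ 2 * x2 * z2,
     a * x1 * z1 * x2 ^ 2 - y1 ^ 2 * y2 * z2,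
     y1 * z1 * z2 ^ 2 - a * x1 ^ 2 * x2 * y2],
    ![x1 * z1 * z2 ^ 2 - y1 ^ 2 * x2 * y2,
     y1 * z1 * y2 ^ 2 - a * x1 ^ 2 * x2 * z2,
     a * x1 * y1 * x2 ^ 2 - z1 ^ 2 * y2 * z2]]

section HessianForm

variable {R : Type*} [CommRing R]

def hessianForm (a d x y z : R) : R :=
  a * x ^ 3 + y ^ 3 + z ^ 3 - d * x * y * z

/-- The norm of `α + β t + γ t²` in `R[t] / (t³ - a)`. -/
def cubicNorm (a α β γ : R) : R :=
  α ^ 3 + a * β ^ 3 + a ^ 2 * γ ^ 3 - 3 * a * α * β * γ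

theorem hessianForm_neg (a d x y z : R) :
    hessianForm a d (-x) (-y) (-z) = -hessianForm a d x y z := by
  unfold hessianForm
  ring

theorem hessianForm_law₀ (a d x1 y1 z1 x2 y2 z2 : R) :
    hessianForm a d (x1 ^ 2 * y2 * z2 - y1 * z1 * x2 ^ 2) (z1 ^ 2 * x2 * y2 - x1 * y1 * z2 ^ 2)
        (y1 ^ 2 * x2 * z2 - x1 * z1 * y2 ^ 2) =
      cubicNorm 1 (x1 * y2 * z2) (y1 * x2 * z2) (z1 * x2 * y2) * hessianForm a d x1 y1 z1 -
        cubicNorm 1 (x2 * y1 * z1) (y2 * x1 * z1) (z2 * x1 * y1) * hessianForm a d x2 y2 z2 := by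
  unfold hessianForm cubicNorm
  ring

theorem hessianForm_law₁ (a d x1 y1 z1 x2 y2 z2 : R) :
    hessianForm a d (x1 * y1 * y2 ^ 2 - z1 ^ 2 * x2 * z2) (a * x1 * z1 * x2 ^ 2 - y1 ^ 2 * y2 * z2)
        (y1 * z1 * z2 ^ 2 - a * x1 ^ 2 * x2 * y2) =
      cubicNorm a (y1 * z1 * z2) (x1 * y1 * y2) (x1 * z1 * x2) * hessianForm a d x2 y2 z2 -
        cubicNorm a (y1 * y2 * z2) (z1 * x2 * z2) (x1 * x2 * y2) * hessianForm a d x1 y1 z1 := by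
  unfold hessianForm cubicNorm
  ring

theorem hessianForm_law₂ (a d x1 y1 z1 x2 y2 z2 : R) :
    hessianForm a d (x1 * z1 * z2 ^ 2 - y1 ^ 2 * x2 * y2) (y1 * z1 * y2 ^ 2 - a * x1 ^ 2 * x2 * z2)
        (a * x1 * y1 * x2 ^ 2 - z1 ^ 2 * y2 * z2) =
      cubicNorm a (y2 * y1 * z1) (z2 * x1 * z1) (x2 * x1 * y1) * hessianForm a d x2 y2 z2 -
        cubicNorm a (y2 * z2 * z1) (x2 * y2 * y1) (x2 * z2 * x1) * hessianForm a d x1 y1 z1 := by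
  calc _ = -hessianForm a d (x2 * y2 * y1 ^ 2 - z2 ^ 2 * x1 * z1)
          (a * x2 * z2 * x1 ^ 2 - y2 ^ 2 * y1 * z1) (y2 * z2 * z1 ^ 2 - a * x2 ^ 2 * x1 * y1) := by
        rw [← hessianForm_neg]
        congr 1 <;> ring
    _ = _ := by
        rw [hessianForm_law₁]
        ring

end HessianForm

theorem hessianEq_iff_hessianForm_eq_zero {k : Type*} [Field k] (a d u v w : k) :
    hessianEq a d u v w ↔ hessianForm a d u v w = 0 :=
  sub_eq_zero.symm

theorem hessian_addition_laws_on_curve_general {k : Type*} [Field k] (a d : k)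
    (x1 y1 z1 x2 y2 z2 : k)
    (hP : hessianEq a d x1 y1 z1)
    (hQ : hessianEq a d x2 y2 z2) :
    ∀ i : Fin 3,
      hessianEq a d (hessianLaw a x1 y1 z1 x2 y2 z2 i 0)
        (hessianLaw a x1 y1 z1 x2 y2 z2 i 1)
        (hessianLaw a x1 y1 z1 x2 y2 z2 i 2) := by
  rw [hessianEq_iff_hessianForm_eq_zero] at hP hQ
  intro i
  rw [hessianEq_iff_hessianForm_eq_zero]
  fin_cases i <;> simp [hessianLaw, hessianForm_law₀, hessianForm_law₁, hessianForm_law₂, hP, hQ]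

/-- Each of the addition laws `s_0, s_1, s_2` maps pairs of points of the twisted
Hessian curve to points satisfying the twisted Hessian equation. -/
theorem hessian_addition_laws_on_curve {k : Type*} [Field k] (a d : k)
    (x1 y1 z1 x2 y2 z2 : k)
    (hP0 : ¬(x1 = 0 ∧ y1 = 0 ∧ z1 = 0)) (hP : hessianEq a d x1 y1 z1)
    (hQ0 : ¬(x2 = 0 ∧ y2 = 0 ∧ z2 = 0)) (hQ : hessianEq a d x2 y2 z2) :
    ∀ i : Fin 3,
      hessianEq a d (hessianLaw a x1 y1 z1 x2 y2 z2 i 0)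
        (hessianLaw a x1 y1 z1 x2 y2 z2 i 1)
        (hessianLaw a x1 y1 z1 x2 y2 z2 i 2) :=
  hessian_addition_laws_on_curve_general a d x1 y1 z1 x2 y2 z2 hP hQ
end

section
/- Assume char(k) ≠ 3 and a*(27a − d^3) ≠ 0. For any k-points P and Q of the twisted Hessian curve H and any indices i ≠ j in {0,1,2}, the vectors s_i(P,Q) and s_j(P,Q) in k^3 are proportional; that is, all 2×2 minors vanish: s_i(P,Q)_m * s_j(P,Q)_n = s_i(P,Q)_n * s_j(P,Q)_m for all m, n ∈ {0,1,2}. (The three addition laws define the same rational map, namely the group law, wherever they are nonzero.) -/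
/-!
Two vectors of `k^3` are proportional exactly when their cross product vanishes. The cross
products `s_i × s_j` do not involve `d`: each is `x2 y2 z2 · F(P) - x1 y1 z1 · F(Q)`, with
`F = a X^3 + Y^3 + Z^3`, times a vector of monomials. This factor vanishes as soon as `P` and `Q`
lie on the same member `F = t · XYZ` of the Hessian pencil, in particular on the same curve `H`.
-/

open Matrix

theorem mul_eq_mul_of_cross_eq_zero {R : Type*} [CommRing R] {u v : Fin 3 → R}
    (h : u ⨯₃ v = 0) (m n : Fin 3) : u m * v n = u n * v m := by
  have h0 := congrFun h 0
  have h1 := congrFun h 1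
  have h2 := congrFun h 2
  simp only [cross_apply, Pi.zero_apply, cons_val] at h0 h1 h2
  fin_cases m <;> fin_cases n <;> simp only [Fin.zero_eta, Fin.mk_one, Fin.reduceFinMk] <;>
    first
    | ring
    | linear_combination h0
    | linear_combination -h0
    | linear_combination h1
    | linear_combination -h1
    | linear_combination h2
    | linear_combination -h2

def hessianPencilDefect {k : Type*} [Field k] (a x1 y1 z1 x2 y2 z2 : k) : k :=
  x2 * y2 * z2 * (a * x1 ^ 3 + y1 ^ 3 + z1 ^ 3) - x1 * y1 * z1 * (a * x2 ^ 3 + y2 ^ 3 + z2 ^ 3)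

section

variable {k : Type*} [Field k] (a x1 y1 z1 x2 y2 z2 : k)

variable {a x1 y1 z1 x2 y2 z2} in
theorem hessianPencilDefect_eq_zero {d : k} (hP : hessianEq a d x1 y1 z1)
    (hQ : hessianEq a d x2 y2 z2) : hessianPencilDefect a x1 y1 z1 x2 y2 z2 = 0 := by
  unfold hessianEq at hP hQ
  unfold hessianPencilDefect
  linear_combination x2 * y2 * z2 * hP - x1 * y1 * z1 * hQ

theorem cross_hessianLaw :
    hessianLaw a x1 y1 z1 x2 y2 z2 1 ⨯₃ hessianLaw a x1 y1 z1 x2 y2 z2 2 =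
        hessianPencilDefect a x1 y1 z1 x2 y2 z2 • ![-(a * x1 * x2), -(z1 * z2), -(y1 * y2)] ∧
      hessianLaw a x1 y1 z1 x2 y2 z2 2 ⨯₃ hessianLaw a x1 y1 z1 x2 y2 z2 0 =
        hessianPencilDefect a x1 y1 z1 x2 y2 z2 • ![z1 * y2, y1 * x2, x1 * z2] ∧
      hessianLaw a x1 y1 z1 x2 y2 z2 0 ⨯₃ hessianLaw a x1 y1 z1 x2 y2 z2 1 =
        hessianPencilDefect a x1 y1 z1 x2 y2 z2 • ![y1 * z2, x1 * y2, z1 * x2] := by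
  refine ⟨?_, ?_, ?_⟩ <;> ext m <;> fin_cases m <;>
    simp [cross_apply, hessianLaw, hessianPencilDefect] <;> ring

variable {a x1 y1 z1 x2 y2 z2} in
theorem cross_hessianLaw_eq_zero (h : hessianPencilDefect a x1 y1 z1 x2 y2 z2 = 0)
    (i j : Fin 3) :
    hessianLaw a x1 y1 z1 x2 y2 z2 i ⨯₃ hessianLaw a x1 y1 z1 x2 y2 z2 j = 0 := by
  obtain ⟨h12, h20, h01⟩ := cross_hessianLaw a x1 y1 z1 x2 y2 z2
  rw [h, zero_smul] at h12 h20 h01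
  fin_cases i <;> fin_cases j <;> simp only [Fin.zero_eta, Fin.mk_one, Fin.reduceFinMk] <;>
    first
    | exact cross_self _
    | assumption
    | rw [← cross_anticomm]; simp only [h12, h20, h01, neg_zero]

end

theorem hessian_addition_laws_proportional_general {k : Type*} [Field k] (a d : k)
    (x1 y1 z1 x2 y2 z2 : k)
    (hP : hessianEq a d x1 y1 z1)
    (hQ : hessianEq a d x2 y2 z2) :
    ∀ i j m n : Fin 3, i ≠ j →
      hessianLaw a x1 y1 z1 x2 y2 z2 i m * hessianLaw a x1 y1 z1 x2 y2 z2 j n =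
        hessianLaw a x1 y1 z1 x2 y2 z2 i n * hessianLaw a x1 y1 z1 x2 y2 z2 j m := by
  intro i j m n _
  exact mul_eq_mul_of_cross_eq_zero
    (cross_hessianLaw_eq_zero (hessianPencilDefect_eq_zero hP hQ) i j) m n

/-- For `char k ≠ 3` and a nonsingular twisted Hessian curve, the three addition
laws are pairwise proportional at every pair of points of the curve:
all 2×2 minors vanish. -/
theorem hessian_addition_laws_proportional {k : Type*} [Field k] (a d : k)
    (hchar : (3 : k) ≠ 0) (hns : a * (27 * a - d ^ 3) ≠ 0)
    (x1 y1 z1 x2 y2 z2 : k)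
    (hP0 : ¬(x1 = 0 ∧ y1 = 0 ∧ z1 = 0)) (hP : hessianEq a d x1 y1 z1)
    (hQ0 : ¬(x2 = 0 ∧ y2 = 0 ∧ z2 = 0)) (hQ : hessianEq a d x2 y2 z2) :
    ∀ i j m n : Fin 3, i ≠ j →
      hessianLaw a x1 y1 z1 x2 y2 z2 i m * hessianLaw a x1 y1 z1 x2 y2 z2 j n =
        hessianLaw a x1 y1 z1 x2 y2 z2 i n * hessianLaw a x1 y1 z1 x2 y2 z2 j m :=
  hessian_addition_laws_proportional_general a d x1 y1 z1 x2 y2 z2 hP hQ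
end

section
/- For any k-points P and Q of the Jacobi model J, each of the 4-tuples s_0(P,Q), s_1(P,Q), s_2(P,Q), s_3(P,Q) again satisfies the three quadric equations of J; i.e. writing (z0,z1,z2,z3) = s_i(P,Q) one has a*z0^2 + z1^2 = z2^2, b*z0^2 + z2^2 = z3^2, and c*z0^2 + z3^2 = z1^2 for i = 0, 1, 2, 3. -/
/-- The three quadric equations of the Jacobi model `J_(a,b)` (with `c = -a-b`):
`a*z0^2 + z1^2 = z2^2`, `b*z0^2 + z2^2 = z3^2`, `c*z0^2 + z3^2 = z1^2`. -/
def onJacobi {k : Type*} [Field k] (a b z0 z1 z2 z3 : k) : Prop :=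
  a * z0 ^ 2 + z1 ^ 2 = z2 ^ 2 ∧
  b * z0 ^ 2 + z2 ^ 2 = z3 ^ 2 ∧
  (-a - b) * z0 ^ 2 + z3 ^ 2 = z1 ^ 2

/-- The four bidegree (2,2) addition laws `s_0, s_1, s_2, s_3` on the Jacobi
model, as a `Fin 4`-indexed family of coordinate 4-tuples. -/
def jacobiLaw {k : Type*} [Field k] (a b x0 x1 x2 x3 y0 y1 y2 y3 : k) :
    Fin 4 → Fin 4 → k :=
  ![![x0 ^ 2 * y1 ^ 2 - x1 ^ 2 * y0 ^ 2,
     x0 * x1 * y2 * y3 - x2 * x3 * y0 * y1,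
     x0 * x2 * y1 * y3 - x1 * x3 * y0 * y2,
     x0 * x3 * y1 * y2 - x1 * x2 * y0 * y3],
    ![x0 * x2 * y1 * y3 + x1 * x3 * y0 * y2,
     -(a * x0 * x3 * y0 * y3) + x1 * x2 * y1 * y2,
     a * b * x0 ^ 2 * y0 ^ 2 + x2 ^ 2 * y2 ^ 2,
     b * x0 * x1 * y0 * y1 + x2 * x3 * y2 * y3],
    ![x0 * x1 * y2 * y3 + x2 * x3 * y0 * y1,
     a * (-a - b) * x0 ^ 2 * y0 ^ 2 + x1 ^ 2 * y1 ^ 2,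
     a * x0 * x3 * y0 * y3 + x1 * x2 * y1 * y2,
     -((-a - b) * x0 * x2 * y0 * y2) + x1 * x3 * y1 * y3],
    ![a * (x0 * x3 * y1 * y2 + x1 * x2 * y0 * y3),
     a * ((-a - b) * x0 * x2 * y0 * y2 + x1 * x3 * y1 * y3),
     a * (-(b * x0 * x1 * y0 * y1) + x2 * x3 * y2 * y3),
     -(b * x1 ^ 2 * y1 ^ 2) - (-a - b) * x2 ^ 2 * y2 ^ 2]]

/-!
The third quadric of `J` is the sum of the first two, so it suffices to check two of them. Each is
an instance of Brahmagupta's identity `(p² + n q²)(r² + n s²) = (pr - n qs)² + n (ps + qr)²`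
(with `n = -1` for `s₀`): on `J` the squares of the coordinates satisfy the linear relations
`x₂² = a x₀² + x₁²`, `x₃² = x₂² + b x₀²`, which turn both factors into multiples of one
coordinate of the sum (`z₀` for `s₀`, `z₂` for `s₁`). The model has the cyclic symmetry
`(x₁, x₂, x₃; a, b, c) ↦ (x₂, x₃, x₁; b, c, a)`, and `s₂`, `s₃` are `s₁` transported along it
(`s₃` up to the factor `a` and the curve equations), so only `s₀` and `s₁` need a computation.
-/

section

variable {k : Type*} [Field k] {a b c z0 z1 z2 z3 x0 x1 x2 x3 y0 y1 y2 y3 : k}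

theorem onJacobi_of_two_quadrics (h₁ : a * z0 ^ 2 + z1 ^ 2 = z2 ^ 2)
    (h₂ : b * z0 ^ 2 + z2 ^ 2 = z3 ^ 2) : onJacobi a b z0 z1 z2 z3 :=
  ⟨h₁, h₂, by linear_combination -h₁ - h₂⟩

namespace onJacobi

theorem smul (t : k) (h : onJacobi a b z0 z1 z2 z3) :
    onJacobi a b (t * z0) (t * z1) (t * z2) (t * z3) :=
  onJacobi_of_two_quadrics (by linear_combination t ^ 2 * h.1)
    (by linear_combination t ^ 2 * h.2.1)

theorem rotate (habc : a + b + c = 0) (h : onJacobi a b z0 z1 z2 z3) :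
    onJacobi b c z0 z2 z3 z1 :=
  ⟨h.2.1, by linear_combination h.2.2 + z0 ^ 2 * habc, by linear_combination h.1 - z0 ^ 2 * habc⟩

theorem rotate_inv (habc : a + b + c = 0) (h : onJacobi a b z0 z1 z2 z3) :
    onJacobi c a z0 z3 z1 z2 :=
  (h.rotate habc).rotate (by linear_combination habc)

end onJacobi

theorem onJacobi_jacobiLaw_zero (hP : onJacobi a b x0 x1 x2 x3) (hQ : onJacobi a b y0 y1 y2 y3) :
    onJacobi a b (jacobiLaw a b x0 x1 x2 x3 y0 y1 y2 y3 0 0)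
      (jacobiLaw a b x0 x1 x2 x3 y0 y1 y2 y3 0 1) (jacobiLaw a b x0 x1 x2 x3 y0 y1 y2 y3 0 2)
      (jacobiLaw a b x0 x1 x2 x3 y0 y1 y2 y3 0 3) := by
  simp only [jacobiLaw, Matrix.cons_val, Matrix.cons_val_zero]
  have h03 : x0 ^ 2 * y3 ^ 2 - x3 ^ 2 * y0 ^ 2 = x0 ^ 2 * y1 ^ 2 - x1 ^ 2 * y0 ^ 2 := by
    linear_combination y0 ^ 2 * (hP.1 + hP.2.1) - x0 ^ 2 * (hQ.1 + hQ.2.1)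
  have h21 : x2 ^ 2 * y1 ^ 2 - x1 ^ 2 * y2 ^ 2 = a * (x0 ^ 2 * y1 ^ 2 - x1 ^ 2 * y0 ^ 2) := by
    linear_combination x1 ^ 2 * hQ.1 - y1 ^ 2 * hP.1
  have h32 : x3 ^ 2 * y2 ^ 2 - x2 ^ 2 * y3 ^ 2 = b * (x0 ^ 2 * y1 ^ 2 - x1 ^ 2 * y0 ^ 2) := by
    linear_combination x2 ^ 2 * hQ.2.1 - y2 ^ 2 * hP.2.1 - b * (x0 ^ 2 * hQ.1 - y0 ^ 2 * hP.1)
  refine onJacobi_of_two_quadrics ?_ ?_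
  · have key : (x0 * x2 * y1 * y3 - x1 * x3 * y0 * y2) ^ 2
          - (x0 * x1 * y2 * y3 - x2 * x3 * y0 * y1) ^ 2
        = (x0 ^ 2 * y3 ^ 2 - x3 ^ 2 * y0 ^ 2) * (x2 ^ 2 * y1 ^ 2 - x1 ^ 2 * y2 ^ 2) := by ring
    rw [h03, h21] at key
    linear_combination -key
  · have key : (x0 * x3 * y1 * y2 - x1 * x2 * y0 * y3) ^ 2
          - (x0 * x2 * y1 * y3 - x1 * x3 * y0 * y2) ^ 2
        = (x0 ^ 2 * y1 ^ 2 - x1 ^ 2 * y0 ^ 2) * (x3 ^ 2 * y2 ^ 2 - x2 ^ 2 * y3 ^ 2) := by ring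
    rw [h32] at key
    linear_combination -key

theorem onJacobi_jacobiLaw_one (hP : onJacobi a b x0 x1 x2 x3) (hQ : onJacobi a b y0 y1 y2 y3) :
    onJacobi a b (jacobiLaw a b x0 x1 x2 x3 y0 y1 y2 y3 1 0)
      (jacobiLaw a b x0 x1 x2 x3 y0 y1 y2 y3 1 1) (jacobiLaw a b x0 x1 x2 x3 y0 y1 y2 y3 1 2)
      (jacobiLaw a b x0 x1 x2 x3 y0 y1 y2 y3 1 3) := by
  simp only [jacobiLaw, Matrix.cons_val, Matrix.cons_val_zero]
  set t := a * b * x0 ^ 2 * y0 ^ 2 + x2 ^ 2 * y2 ^ 2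
  have h12 : (x1 * y2) ^ 2 + a * (x0 * y3) ^ 2 = t := by
    linear_combination y2 ^ 2 * hP.1 - a * x0 ^ 2 * hQ.2.1
  have h21 : (x2 * y1) ^ 2 + a * (x3 * y0) ^ 2 = t := by
    linear_combination x2 ^ 2 * hQ.1 - a * y0 ^ 2 * hP.2.1
  have h23 : (x2 * y3) ^ 2 - b * (x1 * y0) ^ 2 = t := by
    linear_combination -x2 ^ 2 * hQ.2.1 - b * y0 ^ 2 * hP.1
  have h32 : (x3 * y2) ^ 2 - b * (x0 * y1) ^ 2 = t := by
    linear_combination -y2 ^ 2 * hP.2.1 - b * x0 ^ 2 * hQ.1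
  refine onJacobi_of_two_quadrics ?_ ?_
  · have key : a * (x0 * x2 * y1 * y3 + x1 * x3 * y0 * y2) ^ 2
          + (-(a * x0 * x3 * y0 * y3) + x1 * x2 * y1 * y2) ^ 2
        = ((x1 * y2) ^ 2 + a * (x0 * y3) ^ 2) * ((x2 * y1) ^ 2 + a * (x3 * y0) ^ 2) := by ring
    rw [h12, h21] at key
    linear_combination key
  · have key : (b * x0 * x1 * y0 * y1 + x2 * x3 * y2 * y3) ^ 2
          - b * (x0 * x2 * y1 * y3 + x1 * x3 * y0 * y2) ^ 2
        = ((x2 * y3) ^ 2 - b * (x1 * y0) ^ 2) * ((x3 * y2) ^ 2 - b * (x0 * y1) ^ 2) := by ring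
    rw [h23, h32] at key
    linear_combination -key

theorem onJacobi_jacobiLaw_two (hP : onJacobi a b x0 x1 x2 x3) (hQ : onJacobi a b y0 y1 y2 y3) :
    onJacobi a b (jacobiLaw a b x0 x1 x2 x3 y0 y1 y2 y3 2 0)
      (jacobiLaw a b x0 x1 x2 x3 y0 y1 y2 y3 2 1) (jacobiLaw a b x0 x1 x2 x3 y0 y1 y2 y3 2 2)
      (jacobiLaw a b x0 x1 x2 x3 y0 y1 y2 y3 2 3) := by
  have habc : a + b + (-a - b) = 0 := by ring
  have hcab : -a - b + a + b = 0 := by ring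
  have h := (onJacobi_jacobiLaw_one (hP.rotate_inv habc) (hQ.rotate_inv habc)).rotate hcab
  simp only [jacobiLaw, Matrix.cons_val, Matrix.cons_val_zero] at h ⊢
  convert h using 1 <;> ring

theorem onJacobi_jacobiLaw_three (hP : onJacobi a b x0 x1 x2 x3) (hQ : onJacobi a b y0 y1 y2 y3) :
    onJacobi a b (jacobiLaw a b x0 x1 x2 x3 y0 y1 y2 y3 3 0)
      (jacobiLaw a b x0 x1 x2 x3 y0 y1 y2 y3 3 1) (jacobiLaw a b x0 x1 x2 x3 y0 y1 y2 y3 3 2)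
      (jacobiLaw a b x0 x1 x2 x3 y0 y1 y2 y3 3 3) := by
  have habc : a + b + (-a - b) = 0 := by ring
  have hbca : b + (-a - b) + a = 0 := by ring
  have h := ((onJacobi_jacobiLaw_one (hP.rotate habc) (hQ.rotate habc)).rotate_inv hbca).smul a
  simp only [jacobiLaw, Matrix.cons_val, Matrix.cons_val_zero] at h ⊢
  convert h using 1
  · ring
  · ring
  · linear_combination -b * (x3 ^ 2 + (-a - b) * x0 ^ 2) * (hQ.1 + hQ.2.1)
      - b * y1 ^ 2 * (hP.1 + hP.2.1) - (-a - b) * (x3 ^ 2 - b * x0 ^ 2) * hQ.2.1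
      - (-a - b) * y2 ^ 2 * hP.2.1

end

theorem jacobi_addition_laws_on_curve_general {k : Type*} [Field k] (a b : k)
    (x0 x1 x2 x3 y0 y1 y2 y3 : k)
    (hP : onJacobi a b x0 x1 x2 x3)
    (hQ : onJacobi a b y0 y1 y2 y3) :
    ∀ i : Fin 4,
      onJacobi a b (jacobiLaw a b x0 x1 x2 x3 y0 y1 y2 y3 i 0)
        (jacobiLaw a b x0 x1 x2 x3 y0 y1 y2 y3 i 1)
        (jacobiLaw a b x0 x1 x2 x3 y0 y1 y2 y3 i 2)
        (jacobiLaw a b x0 x1 x2 x3 y0 y1 y2 y3 i 3) := by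
  intro i
  fin_cases i
  exacts [onJacobi_jacobiLaw_zero hP hQ, onJacobi_jacobiLaw_one hP hQ,
    onJacobi_jacobiLaw_two hP hQ, onJacobi_jacobiLaw_three hP hQ]

/-- Each of the four addition laws maps pairs of points of the Jacobi model to
tuples satisfying the three quadric equations. -/
theorem jacobi_addition_laws_on_curve {k : Type*} [Field k] (a b : k)
    (hchar : (2 : k) ≠ 0)
    (x0 x1 x2 x3 y0 y1 y2 y3 : k)
    (hP0 : ¬(x0 = 0 ∧ x1 = 0 ∧ x2 = 0 ∧ x3 = 0))
    (hP : onJacobi a b x0 x1 x2 x3)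
    (hQ0 : ¬(y0 = 0 ∧ y1 = 0 ∧ y2 = 0 ∧ y3 = 0))
    (hQ : onJacobi a b y0 y1 y2 y3) :
    ∀ i : Fin 4,
      onJacobi a b (jacobiLaw a b x0 x1 x2 x3 y0 y1 y2 y3 i 0)
        (jacobiLaw a b x0 x1 x2 x3 y0 y1 y2 y3 i 1)
        (jacobiLaw a b x0 x1 x2 x3 y0 y1 y2 y3 i 2)
        (jacobiLaw a b x0 x1 x2 x3 y0 y1 y2 y3 i 3) :=
  jacobi_addition_laws_on_curve_general a b x0 x1 x2 x3 y0 y1 y2 y3 hP hQ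
end

section
/- Assume in addition a*b*c ≠ 0. Then for any two distinct indices i ≠ j in {0,1,2,3} and any k-points P, Q of the Jacobi model J, the 4-tuples s_i(P,Q) and s_j(P,Q) are not both zero; that is, any two of the four addition laws s_0, s_1, s_2, s_3 form a geometrically complete set of addition laws (their exceptional sets are disjoint). -/
/-!
For each pair of laws `s_i, s_j`, one coordinate of `s_i` and one of `s_j` are, up to nonzero
constant factors, `u - v` and `u + v` for two monomials `u, v` of bidegree `(2,2)` that use
complementary pairs of coordinates of `P` and of `Q`; as `2 ≠ 0`, both vanish. Since `abc ≠ 0`,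
a point of `J` has at most one vanishing coordinate, so `u = v = 0` pins down one vanishing
coordinate of `P` and one of `Q`, and in each such configuration some other coordinate of `s_i`
or `s_j` reduces to a nonzero monomial.
-/

section

variable {k : Type*} [Field k] {a b x0 x1 x2 x3 y0 y1 y2 y3 : k}

def AtMostOneZero (z0 z1 z2 z3 : k) : Prop :=
  (z0 ≠ 0 ∧ z1 ≠ 0 ∧ z2 ≠ 0 ∧ z3 ≠ 0) ∨ (z0 = 0 ∧ z1 ≠ 0 ∧ z2 ≠ 0 ∧ z3 ≠ 0) ∨
    (z0 ≠ 0 ∧ z1 = 0 ∧ z2 ≠ 0 ∧ z3 ≠ 0) ∨ (z0 ≠ 0 ∧ z1 ≠ 0 ∧ z2 = 0 ∧ z3 ≠ 0) ∨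
    (z0 ≠ 0 ∧ z1 ≠ 0 ∧ z2 ≠ 0 ∧ z3 = 0)

theorem onJacobi.atMostOneZero {z0 z1 z2 z3 : k} (ha : a ≠ 0) (hb : b ≠ 0) (hc : -a - b ≠ 0)
    (hz : onJacobi a b z0 z1 z2 z3) (hz0 : ¬(z0 = 0 ∧ z1 = 0 ∧ z2 = 0 ∧ z3 = 0)) :
    AtMostOneZero z0 z1 z2 z3 := by
  obtain ⟨e1, e2, e3⟩ := hz
  unfold AtMostOneZero
  -- Two vanishing coordinates among `z1, z2, z3` turn one quadric into `a z0² = 0`, `b z0² = 0`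
  -- or `c z0² = 0`, and `z0 = 0` forces `z1² = z2² = z3²`.
  grind

theorem jacobiLaw_not_both_zero_01 (h2 : (2 : k) ≠ 0) (ha : a ≠ 0)
    (hx : AtMostOneZero x0 x1 x2 x3) (hy : AtMostOneZero y0 y1 y2 y3)
    (hs : ∀ m, jacobiLaw a b x0 x1 x2 x3 y0 y1 y2 y3 0 m = 0)
    (ht : ∀ m, jacobiLaw a b x0 x1 x2 x3 y0 y1 y2 y3 1 m = 0) : False := by
  simp only [jacobiLaw, Fin.forall_fin_succ, Matrix.cons_val, Matrix.cons_val_fin_one,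
    Matrix.cons_val_succ, forall_const] at hs ht
  obtain ⟨_, _, s2, _⟩ := hs
  obtain ⟨t0, _, _, _⟩ := ht
  have hu : x0 * x2 * y1 * y3 = 0 := mul_left_cancel₀ h2 (by linear_combination s2 + t0)
  have hv : x1 * x3 * y0 * y2 = 0 := mul_left_cancel₀ h2 (by linear_combination t0 - s2)
  rcases hx with hx | hx | hx | hx | hx <;> rcases hy with hy | hy | hy | hy | hy <;> simp_all

theorem jacobiLaw_not_both_zero_02 (h2 : (2 : k) ≠ 0) (ha : a ≠ 0)
    (hx : AtMostOneZero x0 x1 x2 x3) (hy : AtMostOneZero y0 y1 y2 y3)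
    (hs : ∀ m, jacobiLaw a b x0 x1 x2 x3 y0 y1 y2 y3 0 m = 0)
    (ht : ∀ m, jacobiLaw a b x0 x1 x2 x3 y0 y1 y2 y3 2 m = 0) : False := by
  simp only [jacobiLaw, Fin.forall_fin_succ, Matrix.cons_val, Matrix.cons_val_fin_one,
    Matrix.cons_val_succ, forall_const] at hs ht
  obtain ⟨_, s1, _, _⟩ := hs
  obtain ⟨t0, _, _, _⟩ := ht
  have hu : x0 * x1 * y2 * y3 = 0 := mul_left_cancel₀ h2 (by linear_combination s1 + t0)
  have hv : x2 * x3 * y0 * y1 = 0 := mul_left_cancel₀ h2 (by linear_combination t0 - s1)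
  rcases hx with hx | hx | hx | hx | hx <;> rcases hy with hy | hy | hy | hy | hy <;> simp_all

theorem jacobiLaw_not_both_zero_03 (h2 : (2 : k) ≠ 0) (ha : a ≠ 0)
    (hx : AtMostOneZero x0 x1 x2 x3) (hy : AtMostOneZero y0 y1 y2 y3)
    (hs : ∀ m, jacobiLaw a b x0 x1 x2 x3 y0 y1 y2 y3 0 m = 0)
    (ht : ∀ m, jacobiLaw a b x0 x1 x2 x3 y0 y1 y2 y3 3 m = 0) : False := by
  simp only [jacobiLaw, Fin.forall_fin_succ, Matrix.cons_val, Matrix.cons_val_fin_one,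
    Matrix.cons_val_succ, forall_const, mul_eq_zero, ha, false_or] at hs ht
  obtain ⟨_, _, _, s3⟩ := hs
  obtain ⟨t0, _, _, _⟩ := ht
  have hu : x0 * x3 * y1 * y2 = 0 := mul_left_cancel₀ h2 (by linear_combination s3 + t0)
  have hv : x1 * x2 * y0 * y3 = 0 := mul_left_cancel₀ h2 (by linear_combination t0 - s3)
  rcases hx with hx | hx | hx | hx | hx <;> rcases hy with hy | hy | hy | hy | hy <;> simp_all

theorem jacobiLaw_not_both_zero_12 (h2 : (2 : k) ≠ 0) (ha : a ≠ 0)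
    (hx : AtMostOneZero x0 x1 x2 x3) (hy : AtMostOneZero y0 y1 y2 y3)
    (hs : ∀ m, jacobiLaw a b x0 x1 x2 x3 y0 y1 y2 y3 1 m = 0)
    (ht : ∀ m, jacobiLaw a b x0 x1 x2 x3 y0 y1 y2 y3 2 m = 0) : False := by
  simp only [jacobiLaw, Fin.forall_fin_succ, Matrix.cons_val, Matrix.cons_val_fin_one,
    Matrix.cons_val_succ, forall_const] at hs ht
  obtain ⟨_, s1, _, _⟩ := hs
  obtain ⟨_, _, t2, _⟩ := ht
  have hu : x1 * x2 * y1 * y2 = 0 := mul_left_cancel₀ h2 (by linear_combination s1 + t2)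
  have hv : x0 * x3 * y0 * y3 = 0 :=
    mul_left_cancel₀ (mul_ne_zero h2 ha) (by linear_combination t2 - s1)
  rcases hx with hx | hx | hx | hx | hx <;> rcases hy with hy | hy | hy | hy | hy <;> simp_all

theorem jacobiLaw_not_both_zero_13 (h2 : (2 : k) ≠ 0) (ha : a ≠ 0) (hb : b ≠ 0)
    (hx : AtMostOneZero x0 x1 x2 x3) (hy : AtMostOneZero y0 y1 y2 y3)
    (hs : ∀ m, jacobiLaw a b x0 x1 x2 x3 y0 y1 y2 y3 1 m = 0)
    (ht : ∀ m, jacobiLaw a b x0 x1 x2 x3 y0 y1 y2 y3 3 m = 0) : False := by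
  simp only [jacobiLaw, Fin.forall_fin_succ, Matrix.cons_val, Matrix.cons_val_fin_one,
    Matrix.cons_val_succ, forall_const, mul_eq_zero, ha, false_or] at hs ht
  obtain ⟨_, _, _, s3⟩ := hs
  obtain ⟨_, _, t2, _⟩ := ht
  have hu : x2 * x3 * y2 * y3 = 0 := mul_left_cancel₀ h2 (by linear_combination s3 + t2)
  have hv : x0 * x1 * y0 * y1 = 0 :=
    mul_left_cancel₀ (mul_ne_zero h2 hb) (by linear_combination s3 - t2)
  rcases hx with hx | hx | hx | hx | hx <;> rcases hy with hy | hy | hy | hy | hy <;> simp_all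

theorem jacobiLaw_not_both_zero_23 (h2 : (2 : k) ≠ 0) (ha : a ≠ 0) (hc : -a - b ≠ 0)
    (hx : AtMostOneZero x0 x1 x2 x3) (hy : AtMostOneZero y0 y1 y2 y3)
    (hs : ∀ m, jacobiLaw a b x0 x1 x2 x3 y0 y1 y2 y3 2 m = 0)
    (ht : ∀ m, jacobiLaw a b x0 x1 x2 x3 y0 y1 y2 y3 3 m = 0) : False := by
  simp only [jacobiLaw, Fin.forall_fin_succ, Matrix.cons_val, Matrix.cons_val_fin_one,
    Matrix.cons_val_succ, forall_const, mul_eq_zero, ha, false_or] at hs ht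
  obtain ⟨_, _, _, s3⟩ := hs
  obtain ⟨_, t1, _, _⟩ := ht
  have hu : x1 * x3 * y1 * y3 = 0 := mul_left_cancel₀ h2 (by linear_combination s3 + t1)
  have hv : x0 * x2 * y0 * y2 = 0 :=
    mul_left_cancel₀ (mul_ne_zero h2 hc) (by linear_combination t1 - s3)
  rcases hx with hx | hx | hx | hx | hx <;> rcases hy with hy | hy | hy | hy | hy <;> simp_all

theorem jacobiLaw_not_both_zero_of_lt (h2 : (2 : k) ≠ 0) (ha : a ≠ 0) (hb : b ≠ 0)
    (hc : -a - b ≠ 0) (hx : AtMostOneZero x0 x1 x2 x3) (hy : AtMostOneZero y0 y1 y2 y3)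
    {i j : Fin 4} (hij : i < j)
    (hs : ∀ m, jacobiLaw a b x0 x1 x2 x3 y0 y1 y2 y3 i m = 0)
    (ht : ∀ m, jacobiLaw a b x0 x1 x2 x3 y0 y1 y2 y3 j m = 0) : False := by
  fin_cases i <;> fin_cases j <;> simp at hij
  exacts [jacobiLaw_not_both_zero_01 h2 ha hx hy hs ht,
    jacobiLaw_not_both_zero_02 h2 ha hx hy hs ht,
    jacobiLaw_not_both_zero_03 h2 ha hx hy hs ht,
    jacobiLaw_not_both_zero_12 h2 ha hx hy hs ht,
    jacobiLaw_not_both_zero_13 h2 ha hb hx hy hs ht,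
    jacobiLaw_not_both_zero_23 h2 ha hc hx hy hs ht]

end

/-- If `a*b*c ≠ 0`, any two distinct addition laws among `s_0, s_1, s_2, s_3`
never vanish simultaneously at a pair of points of the Jacobi model:
they form a geometrically complete set. -/
theorem jacobi_addition_laws_complete {k : Type*} [Field k] (a b : k)
    (hchar : (2 : k) ≠ 0) (habc : a * b * (-a - b) ≠ 0)
    (x0 x1 x2 x3 y0 y1 y2 y3 : k)
    (hP0 : ¬(x0 = 0 ∧ x1 = 0 ∧ x2 = 0 ∧ x3 = 0))
    (hP : onJacobi a b x0 x1 x2 x3)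
    (hQ0 : ¬(y0 = 0 ∧ y1 = 0 ∧ y2 = 0 ∧ y3 = 0))
    (hQ : onJacobi a b y0 y1 y2 y3) :
    ∀ i j : Fin 4, i ≠ j →
      ¬((∀ m : Fin 4, jacobiLaw a b x0 x1 x2 x3 y0 y1 y2 y3 i m = 0) ∧
        (∀ m : Fin 4, jacobiLaw a b x0 x1 x2 x3 y0 y1 y2 y3 j m = 0)) := by
  obtain ⟨hab, hc⟩ := mul_ne_zero_iff.mp habc
  obtain ⟨ha, hb⟩ := mul_ne_zero_iff.mp hab
  have hx := hP.atMostOneZero ha hb hc hP0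
  have hy := hQ.atMostOneZero ha hb hc hQ0
  rintro i j hij ⟨hi, hj⟩
  rcases hij.lt_or_gt with hlt | hlt
  · exact jacobiLaw_not_both_zero_of_lt hchar ha hb hc hx hy hlt hi hj
  · exact jacobiLaw_not_both_zero_of_lt hchar ha hb hc hx hy hlt hj hi
end

section
/- For all k-points P = (x0,x1,x2,x3) and Q = (y0,y1,y2,y3) of E, the following two identities hold: (x0*y3 + x3*y0)*(d*x0*y0 + x3*y3) = (a*x1*y1 + x2*y2)*(x1*y2 + x2*y1), and (x0*y3 − x3*y0)*(d*x0*y0 − x3*y3) = (a*x1*y1 − x2*y2)*(x1*y2 − x2*y1). Equivalently, the two addition law projections s_0 and s_1 define the same point of P^1 (the x-coordinate of P+Q) wherever both are nonzero, and likewise t_0 and t_1 define the same point (the y-coordinate of P+Q). -/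
/-- A point of the projective normal closure `E ⊂ P^3` of the twisted Edwards
curve `a*x^2 + y^2 = 1 + d*x^2*y^2`: a nonzero tuple satisfying
`d*X0^2 + X3^2 = a*X1^2 + X2^2` and `X0*X3 = X1*X2`. -/
def isEdwardsPoint {k : Type*} [Field k] (a d x0 x1 x2 x3 : k) : Prop :=
  ¬(x0 = 0 ∧ x1 = 0 ∧ x2 = 0 ∧ x3 = 0) ∧
  d * x0 ^ 2 + x3 ^ 2 = a * x1 ^ 2 + x2 ^ 2 ∧
  x0 * x3 = x1 * x2

section EdwardsQuadrics

variable {R : Type*} [CommRing R] (a d x0 x1 x2 x3 y0 y1 y2 y3 : R)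

theorem edwards_s_projections_agree
    (hP1 : d * x0 ^ 2 + x3 ^ 2 = a * x1 ^ 2 + x2 ^ 2) (hP2 : x0 * x3 = x1 * x2)
    (hQ1 : d * y0 ^ 2 + y3 ^ 2 = a * y1 ^ 2 + y2 ^ 2) (hQ2 : y0 * y3 = y1 * y2) :
    (x0 * y3 + x3 * y0) * (d * x0 * y0 + x3 * y3) =
      (a * x1 * y1 + x2 * y2) * (x1 * y2 + x2 * y1) :=
  calc (x0 * y3 + x3 * y0) * (d * x0 * y0 + x3 * y3)
      = y0 * y3 * (d * x0 ^ 2 + x3 ^ 2) + x0 * x3 * (d * y0 ^ 2 + y3 ^ 2) := by ring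
    _ = y1 * y2 * (a * x1 ^ 2 + x2 ^ 2) + x1 * x2 * (a * y1 ^ 2 + y2 ^ 2) := by
      rw [hP1, hP2, hQ1, hQ2]
    _ = (a * x1 * y1 + x2 * y2) * (x1 * y2 + x2 * y1) := by ring

/- The sign change `(y0 : y1 : y2 : y3) ↦ (-y0 : y1 : -y2 : y3)`, i.e. `(x, y) ↦ (x, -y)`,
preserves both quadrics and turns the `s`-identity into the `t`-identity. -/
theorem edwards_t_projections_agree
    (hP1 : d * x0 ^ 2 + x3 ^ 2 = a * x1 ^ 2 + x2 ^ 2) (hP2 : x0 * x3 = x1 * x2)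
    (hQ1 : d * y0 ^ 2 + y3 ^ 2 = a * y1 ^ 2 + y2 ^ 2) (hQ2 : y0 * y3 = y1 * y2) :
    (x0 * y3 - x3 * y0) * (d * x0 * y0 - x3 * y3) =
      (a * x1 * y1 - x2 * y2) * (x1 * y2 - x2 * y1) := by
  have hs := edwards_s_projections_agree a d x0 x1 x2 x3 (-y0) y1 (-y2) y3 hP1 hP2
    (by linear_combination hQ1) (by linear_combination -hQ2)
  linear_combination -hs

end EdwardsQuadrics

theorem edwards_projections_agree_general {k : Type*} [Field k] (a d : k)
    (x0 x1 x2 x3 y0 y1 y2 y3 : k)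
    (hP : isEdwardsPoint a d x0 x1 x2 x3)
    (hQ : isEdwardsPoint a d y0 y1 y2 y3) :
    (x0 * y3 + x3 * y0) * (d * x0 * y0 + x3 * y3) =
        (a * x1 * y1 + x2 * y2) * (x1 * y2 + x2 * y1) ∧
      (x0 * y3 - x3 * y0) * (d * x0 * y0 - x3 * y3) =
        (a * x1 * y1 - x2 * y2) * (x1 * y2 - x2 * y1) := by
  obtain ⟨-, hP1, hP2⟩ := hP
  obtain ⟨-, hQ1, hQ2⟩ := hQ
  exact ⟨edwards_s_projections_agree a d x0 x1 x2 x3 y0 y1 y2 y3 hP1 hP2 hQ1 hQ2,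
    edwards_t_projections_agree a d x0 x1 x2 x3 y0 y1 y2 y3 hP1 hP2 hQ1 hQ2⟩

/-- On the twisted Edwards model, the two addition law projections `s_0, s_1`
for the `x`-coordinate agree as points of `P^1`, and likewise `t_0, t_1` for
the `y`-coordinate:
`(x0*y3 + x3*y0)*(d*x0*y0 + x3*y3) = (a*x1*y1 + x2*y2)*(x1*y2 + x2*y1)` and
`(x0*y3 - x3*y0)*(d*x0*y0 - x3*y3) = (a*x1*y1 - x2*y2)*(x1*y2 - x2*y1)`. -/
theorem edwards_projections_agree {k : Type*} [Field k] (a d : k)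
    (hchar : (2 : k) ≠ 0) (hns : a * d * (a - d) ≠ 0)
    (x0 x1 x2 x3 y0 y1 y2 y3 : k)
    (hP : isEdwardsPoint a d x0 x1 x2 x3)
    (hQ : isEdwardsPoint a d y0 y1 y2 y3) :
    (x0 * y3 + x3 * y0) * (d * x0 * y0 + x3 * y3) =
        (a * x1 * y1 + x2 * y2) * (x1 * y2 + x2 * y1) ∧
      (x0 * y3 - x3 * y0) * (d * x0 * y0 - x3 * y3) =
        (a * x1 * y1 - x2 * y2) * (x1 * y2 - x2 * y1) :=
  edwards_projections_agree_general a d x0 x1 x2 x3 y0 y1 y2 y3 hP hQ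
end

section
/- Suppose c, e ∈ k satisfy c^2 = a ≠ 0 and e^2 = d ≠ 0. Define linear maps on k^4: L(x0,x1,x2,x3) = (−x0, c^{-1}x2, −c*x1, x3) (translation by the 4-torsion point T1 = (0:1:0:c)), L'(x0,x1,x2,x3) = (−x0, −c^{-1}x2, c*x1, x3) (translation by −T1), M(x0,x1,x2,x3) = (−e^{-1}x3, x1, −x2, e*x0) (translation by T2 = (1:0:e:0)), and M'(x0,x1,x2,x3) = (e^{-1}x3, x1, −x2, −e*x0) (translation by −T2). Then for ALL x, y ∈ k^4 the following exact componentwise identities hold: s_0(Lx, L'y) = −s_0(x,y), s_1(Lx, L'y) = s_1(x,y), t_0(Lx, L'y) = −t_0(x,y), t_1(Lx, L'y) = t_1(x,y); and s_0(Mx, M'y) = s_0(x,y), s_1(Mx, M'y) = −s_1(x,y), t_0(Mx, M'y) = −t_0(x,y), t_1(Mx, M'y) = t_1(x,y). In particular each of s_0, s_1, t_0, t_1 is an eigenvector, with the indicated eigenvalues, for the action of the torsion elements (T1, −T1, O) and (T2, −T2, O). -/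
/-- Addition law projection `s_0` for the `x`-coordinate on the twisted Edwards model. -/
def edwardsS0 {k : Type*} [Field k] (a : k) (x0 x1 x2 x3 y0 y1 y2 y3 : k) : k × k :=
  (x0 * y3 + x3 * y0, a * x1 * y1 + x2 * y2)

/-- Addition law projection `s_1` for the `x`-coordinate on the twisted Edwards model. -/
def edwardsS1 {k : Type*} [Field k] (d : k) (x0 x1 x2 x3 y0 y1 y2 y3 : k) : k × k :=
  (x1 * y2 + x2 * y1, d * x0 * y0 + x3 * y3)

/-- Addition law projection `t_0` for the `y`-coordinate on the twisted Edwards model. -/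
def edwardsT0 {k : Type*} [Field k] (x0 x1 x2 x3 y0 y1 y2 y3 : k) : k × k :=
  (x0 * y3 - x3 * y0, x1 * y2 - x2 * y1)

/-- Addition law projection `t_1` for the `y`-coordinate on the twisted Edwards model. -/
def edwardsT1 {k : Type*} [Field k] (a d : k) (x0 x1 x2 x3 y0 y1 y2 y3 : k) : k × k :=
  (a * x1 * y1 - x2 * y2, d * x0 * y0 - x3 * y3)

/-!
With `c⁻¹` replaced by any `c'` satisfying `c * c' = 1` (and likewise for `e`), every identity
becomes polynomial and is a linear combination of that single relation.
-/

section TranslateT1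

variable {k : Type*} [Field k] {c c' : k} (h : c * c' = 1) (x0 x1 x2 x3 y0 y1 y2 y3 : k)
include h

theorem edwardsS0_translate_T1 :
    edwardsS0 (c ^ 2) (-x0) (c' * x2) (-(c * x1)) x3 (-y0) (-(c' * y2)) (c * y1) y3 =
      -edwardsS0 (c ^ 2) x0 x1 x2 x3 y0 y1 y2 y3 := by
  simp only [edwardsS0, Prod.neg_mk, Prod.mk.injEq]
  exact ⟨by ring, by linear_combination (-(x2 * y2) * (c * c' + 1)) * h⟩

theorem edwardsS1_translate_T1 (d : k) :
    edwardsS1 d (-x0) (c' * x2) (-(c * x1)) x3 (-y0) (-(c' * y2)) (c * y1) y3 =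
      edwardsS1 d x0 x1 x2 x3 y0 y1 y2 y3 := by
  simp only [edwardsS1, Prod.mk.injEq]
  exact ⟨by linear_combination (x1 * y2 + x2 * y1) * h, by ring⟩

theorem edwardsT0_translate_T1 :
    edwardsT0 (-x0) (c' * x2) (-(c * x1)) x3 (-y0) (-(c' * y2)) (c * y1) y3 =
      -edwardsT0 x0 x1 x2 x3 y0 y1 y2 y3 := by
  simp only [edwardsT0, Prod.neg_mk, Prod.mk.injEq]
  exact ⟨by ring, by linear_combination (x2 * y1 - x1 * y2) * h⟩

theorem edwardsT1_translate_T1 (d : k) :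
    edwardsT1 (c ^ 2) d (-x0) (c' * x2) (-(c * x1)) x3 (-y0) (-(c' * y2)) (c * y1) y3 =
      edwardsT1 (c ^ 2) d x0 x1 x2 x3 y0 y1 y2 y3 := by
  simp only [edwardsT1, Prod.mk.injEq]
  exact ⟨by linear_combination (-(x2 * y2) * (c * c' + 1)) * h, by ring⟩

end TranslateT1

section TranslateT2

variable {k : Type*} [Field k] {e e' : k} (h : e * e' = 1) (x0 x1 x2 x3 y0 y1 y2 y3 : k)
include h

theorem edwardsS0_translate_T2 (a : k) :
    edwardsS0 a (-(e' * x3)) x1 (-x2) (e * x0) (e' * y3) y1 (-y2) (-(e * y0)) =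
      edwardsS0 a x0 x1 x2 x3 y0 y1 y2 y3 := by
  simp only [edwardsS0, Prod.mk.injEq]
  exact ⟨by linear_combination (x0 * y3 + x3 * y0) * h, by ring⟩

theorem edwardsS1_translate_T2 :
    edwardsS1 (e ^ 2) (-(e' * x3)) x1 (-x2) (e * x0) (e' * y3) y1 (-y2) (-(e * y0)) =
      -edwardsS1 (e ^ 2) x0 x1 x2 x3 y0 y1 y2 y3 := by
  simp only [edwardsS1, Prod.neg_mk, Prod.mk.injEq]
  exact ⟨by ring, by linear_combination (-(x3 * y3) * (e * e' + 1)) * h⟩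

theorem edwardsT0_translate_T2 :
    edwardsT0 (-(e' * x3)) x1 (-x2) (e * x0) (e' * y3) y1 (-y2) (-(e * y0)) =
      -edwardsT0 x0 x1 x2 x3 y0 y1 y2 y3 := by
  simp only [edwardsT0, Prod.neg_mk, Prod.mk.injEq]
  exact ⟨by linear_combination (x3 * y0 - x0 * y3) * h, by ring⟩

theorem edwardsT1_translate_T2 (a : k) :
    edwardsT1 a (e ^ 2) (-(e' * x3)) x1 (-x2) (e * x0) (e' * y3) y1 (-y2) (-(e * y0)) =
      edwardsT1 a (e ^ 2) x0 x1 x2 x3 y0 y1 y2 y3 := by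
  simp only [edwardsT1, Prod.mk.injEq]
  exact ⟨by ring, by linear_combination (-(x3 * y3) * (e * e' + 1)) * h⟩

end TranslateT2

theorem edwards_laws_eigenvectors_general {k : Type*} [Field k] (a d c e : k)
    (hc : c ^ 2 = a) (ha : a ≠ 0) (he : e ^ 2 = d) (hd : d ≠ 0) :
    ∀ x0 x1 x2 x3 y0 y1 y2 y3 : k,
      -- action of (T1, -T1, O): Lx = (-x0, c⁻¹x2, -c*x1, x3), L'y = (-y0, -c⁻¹y2, c*y1, y3)
      (edwardsS0 a (-x0) (c⁻¹ * x2) (-(c * x1)) x3 (-y0) (-(c⁻¹ * y2)) (c * y1) y3 =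
          -(edwardsS0 a x0 x1 x2 x3 y0 y1 y2 y3)) ∧
      (edwardsS1 d (-x0) (c⁻¹ * x2) (-(c * x1)) x3 (-y0) (-(c⁻¹ * y2)) (c * y1) y3 =
          edwardsS1 d x0 x1 x2 x3 y0 y1 y2 y3) ∧
      (edwardsT0 (-x0) (c⁻¹ * x2) (-(c * x1)) x3 (-y0) (-(c⁻¹ * y2)) (c * y1) y3 =
          -(edwardsT0 x0 x1 x2 x3 y0 y1 y2 y3)) ∧
      (edwardsT1 a d (-x0) (c⁻¹ * x2) (-(c * x1)) x3 (-y0) (-(c⁻¹ * y2)) (c * y1) y3 =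
          edwardsT1 a d x0 x1 x2 x3 y0 y1 y2 y3) ∧
      -- action of (T2, -T2, O): Mx = (-e⁻¹x3, x1, -x2, e*x0), M'y = (e⁻¹y3, y1, -y2, -e*y0)
      (edwardsS0 a (-(e⁻¹ * x3)) x1 (-x2) (e * x0) (e⁻¹ * y3) y1 (-y2) (-(e * y0)) =
          edwardsS0 a x0 x1 x2 x3 y0 y1 y2 y3) ∧
      (edwardsS1 d (-(e⁻¹ * x3)) x1 (-x2) (e * x0) (e⁻¹ * y3) y1 (-y2) (-(e * y0)) =
          -(edwardsS1 d x0 x1 x2 x3 y0 y1 y2 y3)) ∧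
      (edwardsT0 (-(e⁻¹ * x3)) x1 (-x2) (e * x0) (e⁻¹ * y3) y1 (-y2) (-(e * y0)) =
          -(edwardsT0 x0 x1 x2 x3 y0 y1 y2 y3)) ∧
      (edwardsT1 a d (-(e⁻¹ * x3)) x1 (-x2) (e * x0) (e⁻¹ * y3) y1 (-y2) (-(e * y0)) =
          edwardsT1 a d x0 x1 x2 x3 y0 y1 y2 y3) := by
  intro x0 x1 x2 x3 y0 y1 y2 y3
  subst hc he
  have hc : c * c⁻¹ = 1 := mul_inv_cancel₀ (by rintro rfl; simp at ha)
  have he : e * e⁻¹ = 1 := mul_inv_cancel₀ (by rintro rfl; simp at hd)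
  exact ⟨edwardsS0_translate_T1 hc .., edwardsS1_translate_T1 hc .., edwardsT0_translate_T1 hc ..,
    edwardsT1_translate_T1 hc .., edwardsS0_translate_T2 he .., edwardsS1_translate_T2 he ..,
    edwardsT0_translate_T2 he .., edwardsT1_translate_T2 he ..⟩

/-- Each of `s_0, s_1, t_0, t_1` is an eigenvector, with the indicated eigenvalues,
for the action of the torsion elements `(T1, -T1, O)` and `(T2, -T2, O)`, where
`T1 = (0:1:0:c)`, `T2 = (1:0:e:0)`, `c^2 = a`, `e^2 = d`, and translation by
`±T1`, `±T2` is given by the linear maps `L, L', M, M'` on `k^4`. -/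
theorem edwards_laws_eigenvectors {k : Type*} [Field k] (a d c e : k)
    (hchar : (2 : k) ≠ 0) (hns : a * d * (a - d) ≠ 0)
    (hc : c ^ 2 = a) (ha : a ≠ 0) (he : e ^ 2 = d) (hd : d ≠ 0) :
    ∀ x0 x1 x2 x3 y0 y1 y2 y3 : k,
      -- action of (T1, -T1, O): Lx = (-x0, c⁻¹x2, -c*x1, x3), L'y = (-y0, -c⁻¹y2, c*y1, y3)
      (edwardsS0 a (-x0) (c⁻¹ * x2) (-(c * x1)) x3 (-y0) (-(c⁻¹ * y2)) (c * y1) y3 =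
          -(edwardsS0 a x0 x1 x2 x3 y0 y1 y2 y3)) ∧
      (edwardsS1 d (-x0) (c⁻¹ * x2) (-(c * x1)) x3 (-y0) (-(c⁻¹ * y2)) (c * y1) y3 =
          edwardsS1 d x0 x1 x2 x3 y0 y1 y2 y3) ∧
      (edwardsT0 (-x0) (c⁻¹ * x2) (-(c * x1)) x3 (-y0) (-(c⁻¹ * y2)) (c * y1) y3 =
          -(edwardsT0 x0 x1 x2 x3 y0 y1 y2 y3)) ∧
      (edwardsT1 a d (-x0) (c⁻¹ * x2) (-(c * x1)) x3 (-y0) (-(c⁻¹ * y2)) (c * y1) y3 =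
          edwardsT1 a d x0 x1 x2 x3 y0 y1 y2 y3) ∧
      -- action of (T2, -T2, O): Mx = (-e⁻¹x3, x1, -x2, e*x0), M'y = (e⁻¹y3, y1, -y2, -e*y0)
      (edwardsS0 a (-(e⁻¹ * x3)) x1 (-x2) (e * x0) (e⁻¹ * y3) y1 (-y2) (-(e * y0)) =
          edwardsS0 a x0 x1 x2 x3 y0 y1 y2 y3) ∧
      (edwardsS1 d (-(e⁻¹ * x3)) x1 (-x2) (e * x0) (e⁻¹ * y3) y1 (-y2) (-(e * y0)) =
          -(edwardsS1 d x0 x1 x2 x3 y0 y1 y2 y3)) ∧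
      (edwardsT0 (-(e⁻¹ * x3)) x1 (-x2) (e * x0) (e⁻¹ * y3) y1 (-y2) (-(e * y0)) =
          -(edwardsT0 x0 x1 x2 x3 y0 y1 y2 y3)) ∧
      (edwardsT1 a d (-(e⁻¹ * x3)) x1 (-x2) (e * x0) (e⁻¹ * y3) y1 (-y2) (-(e * y0)) =
          edwardsT1 a d x0 x1 x2 x3 y0 y1 y2 y3) :=
  edwards_laws_eigenvectors_general a d c e hc ha he hd
end

section
/- There exist k-points P, Q of E with s_0(P,Q) = (0,0) if and only if a is a square in k; there exist k-points P, Q with s_1(P,Q) = (0,0) if and only if d is a square in k; and there exist k-points P, Q with t_1(P,Q) = (0,0) if and only if a*d is a square in k. Equivalently: the addition law projection s_0 is k-complete if and only if a is a nonsquare, s_1 is k-complete if and only if d is a nonsquare, and t_1 is k-complete if and only if a*d is a nonsquare. -/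
namespace isEdwardsPoint

variable {k : Type*} [Field k] {a d x0 x1 x2 x3 : k}

theorem swap (hP : isEdwardsPoint a d x0 x1 x2 x3) : isEdwardsPoint d a x1 x0 x3 x2 := by
  obtain ⟨hP0, hP1, hP2⟩ := hP
  exact ⟨fun ⟨h1, h0, h3, h2⟩ => hP0 ⟨h0, h1, h2, h3⟩, hP1.symm, hP2.symm⟩

theorem x0_ne_zero_or_x3_ne_zero (ha : a ≠ 0) (hP : isEdwardsPoint a d x0 x1 x2 x3) :
    x0 ≠ 0 ∨ x3 ≠ 0 := by
  obtain ⟨hP0, hP1, hP2⟩ := hP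
  by_contra! h
  obtain ⟨rfl, rfl⟩ := h
  have hx12 : x1 * x2 = 0 := by linear_combination -hP2
  rcases mul_eq_zero.1 hx12 with rfl | rfl
  · exact hP0 ⟨rfl, rfl, pow_eq_zero_iff two_ne_zero |>.1 (by linear_combination -hP1), rfl⟩
  · have : a * x1 ^ 2 = 0 := by linear_combination -hP1
    exact hP0 ⟨rfl, pow_eq_zero_iff two_ne_zero |>.1 ((mul_eq_zero.1 this).resolve_left ha),
      rfl, rfl⟩

theorem x1_ne_zero_or_x2_ne_zero (hd : d ≠ 0) (hP : isEdwardsPoint a d x0 x1 x2 x3) :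
    x1 ≠ 0 ∨ x2 ≠ 0 :=
  hP.swap.x0_ne_zero_or_x3_ne_zero hd

end isEdwardsPoint

theorem isEdwardsPoint_identity {k : Type*} [Field k] (a d : k) : isEdwardsPoint a d 0 0 1 1 :=
  ⟨by simp, by ring, by ring⟩

theorem exists_sq_eq_of_mul_sq_eq_sq {k : Type*} [Field k] {c u v : k} (hu : u ≠ 0)
    (h : c * u ^ 2 = v ^ 2) : ∃ r : k, r ^ 2 = c :=
  ⟨v / u, by field_simp; linear_combination -h⟩

section Vanishing

variable {k : Type*} [Field k] {a d x0 x1 x2 x3 y0 y1 y2 y3 : k}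

theorem exists_sq_eq_of_s0_eq_zero_of_x1_eq_zero (ha : a ≠ 0) (hd : d ≠ 0)
    (hP : isEdwardsPoint a d x0 x1 x2 x3) (hQ : isEdwardsPoint a d y0 y1 y2 y3)
    (h₁ : x0 * y3 + x3 * y0 = 0) (h₂ : a * x1 * y1 + x2 * y2 = 0) (hx1 : x1 = 0) :
    ∃ r : k, r ^ 2 = a := by
  subst hx1
  have hx2 : x2 ≠ 0 := (hP.x1_ne_zero_or_x2_ne_zero hd).resolve_left (not_not.2 rfl)
  have hy2 : y2 = 0 := (mul_eq_zero.1 (by linear_combination h₂ : x2 * y2 = 0)).resolve_left hx2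
  have hy1 : y1 ≠ 0 := (hQ.x1_ne_zero_or_x2_ne_zero hd).resolve_right (not_not.2 hy2)
  subst hy2
  have hx03 := hP.x0_ne_zero_or_x3_ne_zero ha
  obtain ⟨-, hP1, -⟩ := hP
  obtain ⟨-, hQ1, -⟩ := hQ
  rcases hx03 with hx0 | hx3
  · refine exists_sq_eq_of_mul_sq_eq_sq (mul_ne_zero hx0 hy1) (v := x2 * y0) ?_
    linear_combination -x0 ^ 2 * hQ1 + y0 ^ 2 * hP1 + (x0 * y3 - x3 * y0) * h₁
  · refine exists_sq_eq_of_mul_sq_eq_sq (mul_ne_zero hx3 hy1) (v := x2 * y3) ?_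
    linear_combination -x3 ^ 2 * hQ1 + y3 ^ 2 * hP1 - d * (x0 * y3 - x3 * y0) * h₁

theorem exists_sq_eq_of_s0_eq_zero (ha : a ≠ 0) (hd : d ≠ 0)
    (hP : isEdwardsPoint a d x0 x1 x2 x3) (hQ : isEdwardsPoint a d y0 y1 y2 y3)
    (h₁ : x0 * y3 + x3 * y0 = 0) (h₂ : a * x1 * y1 + x2 * y2 = 0) :
    ∃ r : k, r ^ 2 = a := by
  by_cases hx1 : x1 = 0
  · exact exists_sq_eq_of_s0_eq_zero_of_x1_eq_zero ha hd hP hQ h₁ h₂ hx1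
  by_cases hy1 : y1 = 0
  · exact exists_sq_eq_of_s0_eq_zero_of_x1_eq_zero ha hd hQ hP
      (by linear_combination h₁) (by linear_combination h₂) hy1
  obtain ⟨-, -, hP2⟩ := hP
  obtain ⟨-, -, hQ2⟩ := hQ
  refine exists_sq_eq_of_mul_sq_eq_sq (mul_ne_zero hx1 hy1) (v := x0 * y3) ?_
  linear_combination x1 * y1 * h₂ - x0 * y3 * h₁ + y0 * y3 * hP2 + x1 * x2 * hQ2

theorem exists_sq_eq_of_t1_eq_zero_of_x0_eq_zero (ha : a ≠ 0) (hd : d ≠ 0)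
    (hP : isEdwardsPoint a d x0 x1 x2 x3) (hQ : isEdwardsPoint a d y0 y1 y2 y3)
    (h₁ : a * x1 * y1 - x2 * y2 = 0) (h₂ : d * x0 * y0 - x3 * y3 = 0) (hx0 : x0 = 0) :
    ∃ r : k, r ^ 2 = a * d := by
  subst hx0
  have hx3 : x3 ≠ 0 := (hP.x0_ne_zero_or_x3_ne_zero ha).resolve_left (not_not.2 rfl)
  have hy3 : y3 = 0 := (mul_eq_zero.1 (by linear_combination -h₂ : x3 * y3 = 0)).resolve_left hx3
  have hy0 : y0 ≠ 0 := (hQ.x0_ne_zero_or_x3_ne_zero ha).resolve_right (not_not.2 hy3)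
  subst hy3
  have hx12 := hP.x1_ne_zero_or_x2_ne_zero hd
  obtain ⟨-, hP1, -⟩ := hP
  obtain ⟨-, hQ1, -⟩ := hQ
  rcases hx12 with hx1 | hx2
  · refine exists_sq_eq_of_mul_sq_eq_sq (mul_ne_zero hx1 hy0) (v := x3 * y2) ?_
    linear_combination a * x1 ^ 2 * hQ1 - y2 ^ 2 * hP1 + (a * x1 * y1 + x2 * y2) * h₁
  · refine exists_sq_eq_of_mul_sq_eq_sq (mul_ne_zero hx2 hy0) (v := a * x3 * y1) ?_
    linear_combination a * x2 ^ 2 * hQ1 - a ^ 2 * y1 ^ 2 * hP1 - a * (a * x1 * y1 + x2 * y2) * h₁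

theorem exists_sq_eq_of_t1_eq_zero (ha : a ≠ 0) (hd : d ≠ 0)
    (hP : isEdwardsPoint a d x0 x1 x2 x3) (hQ : isEdwardsPoint a d y0 y1 y2 y3)
    (h₁ : a * x1 * y1 - x2 * y2 = 0) (h₂ : d * x0 * y0 - x3 * y3 = 0) :
    ∃ r : k, r ^ 2 = a * d := by
  by_cases hx0 : x0 = 0
  · exact exists_sq_eq_of_t1_eq_zero_of_x0_eq_zero ha hd hP hQ h₁ h₂ hx0
  by_cases hy0 : y0 = 0
  · exact exists_sq_eq_of_t1_eq_zero_of_x0_eq_zero ha hd hQ hP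
      (by linear_combination h₁) (by linear_combination h₂) hy0
  obtain ⟨-, -, hP2⟩ := hP
  obtain ⟨-, -, hQ2⟩ := hQ
  refine exists_sq_eq_of_mul_sq_eq_sq (mul_ne_zero hx0 hy0) (v := a * x1 * y1) ?_
  linear_combination a * x0 * y0 * h₂ - a * x1 * y1 * h₁ + a * y0 * y3 * hP2 + a * x1 * x2 * hQ2

end Vanishing

section Completeness

variable {k : Type*} [Field k] {a d : k}

theorem s0_vanishes_iff (ha : a ≠ 0) (hd : d ≠ 0) :
    (∃ x0 x1 x2 x3 y0 y1 y2 y3 : k,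
        isEdwardsPoint a d x0 x1 x2 x3 ∧ isEdwardsPoint a d y0 y1 y2 y3 ∧
        x0 * y3 + x3 * y0 = 0 ∧ a * x1 * y1 + x2 * y2 = 0) ↔ ∃ r : k, r ^ 2 = a := by
  constructor
  · rintro ⟨x0, x1, x2, x3, y0, y1, y2, y3, hP, hQ, h₁, h₂⟩
    exact exists_sq_eq_of_s0_eq_zero ha hd hP hQ h₁ h₂
  · rintro ⟨r, hr⟩
    exact ⟨0, 1, 0, r, 0, 0, 1, 1, ⟨by simp, by linear_combination hr, by ring⟩,
      isEdwardsPoint_identity a d, by ring, by ring⟩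

theorem s1_vanishes_iff (ha : a ≠ 0) (hd : d ≠ 0) :
    (∃ x0 x1 x2 x3 y0 y1 y2 y3 : k,
        isEdwardsPoint a d x0 x1 x2 x3 ∧ isEdwardsPoint a d y0 y1 y2 y3 ∧
        x1 * y2 + x2 * y1 = 0 ∧ d * x0 * y0 + x3 * y3 = 0) ↔ ∃ r : k, r ^ 2 = d := by
  rw [← s0_vanishes_iff hd ha]
  constructor
  · rintro ⟨x0, x1, x2, x3, y0, y1, y2, y3, hP, hQ, h₁, h₂⟩
    exact ⟨x1, x0, x3, x2, y1, y0, y3, y2, hP.swap, hQ.swap, h₁, h₂⟩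
  · rintro ⟨x1, x0, x3, x2, y1, y0, y3, y2, hP, hQ, h₁, h₂⟩
    exact ⟨x0, x1, x2, x3, y0, y1, y2, y3, hP.swap, hQ.swap, h₁, h₂⟩

theorem t1_vanishes_iff (ha : a ≠ 0) (hd : d ≠ 0) :
    (∃ x0 x1 x2 x3 y0 y1 y2 y3 : k,
        isEdwardsPoint a d x0 x1 x2 x3 ∧ isEdwardsPoint a d y0 y1 y2 y3 ∧
        a * x1 * y1 - x2 * y2 = 0 ∧ d * x0 * y0 - x3 * y3 = 0) ↔ ∃ r : k, r ^ 2 = a * d := by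
  constructor
  · rintro ⟨x0, x1, x2, x3, y0, y1, y2, y3, hP, hQ, h₁, h₂⟩
    exact exists_sq_eq_of_t1_eq_zero ha hd hP hQ h₁ h₂
  · rintro ⟨r, hr⟩
    exact ⟨a, r, 0, 0, 0, 0, 1, 1, ⟨fun h => ha h.1, by linear_combination -a * hr, by ring⟩,
      isEdwardsPoint_identity a d, by ring, by ring⟩

end Completeness

theorem edwards_completeness_general {k : Type*} [Field k] (a d : k)
    (hns : a * d * (a - d) ≠ 0) :
    ((∃ x0 x1 x2 x3 y0 y1 y2 y3 : k,
        isEdwardsPoint a d x0 x1 x2 x3 ∧ isEdwardsPoint a d y0 y1 y2 y3 ∧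
        x0 * y3 + x3 * y0 = 0 ∧ a * x1 * y1 + x2 * y2 = 0) ↔ ∃ r : k, r ^ 2 = a) ∧
    ((∃ x0 x1 x2 x3 y0 y1 y2 y3 : k,
        isEdwardsPoint a d x0 x1 x2 x3 ∧ isEdwardsPoint a d y0 y1 y2 y3 ∧
        x1 * y2 + x2 * y1 = 0 ∧ d * x0 * y0 + x3 * y3 = 0) ↔ ∃ r : k, r ^ 2 = d) ∧
    ((∃ x0 x1 x2 x3 y0 y1 y2 y3 : k,
        isEdwardsPoint a d x0 x1 x2 x3 ∧ isEdwardsPoint a d y0 y1 y2 y3 ∧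
        a * x1 * y1 - x2 * y2 = 0 ∧ d * x0 * y0 - x3 * y3 = 0) ↔ ∃ r : k, r ^ 2 = a * d) := by
  have had : a * d ≠ 0 := left_ne_zero_of_mul hns
  have ha : a ≠ 0 := left_ne_zero_of_mul had
  have hd : d ≠ 0 := right_ne_zero_of_mul had
  exact ⟨s0_vanishes_iff ha hd, s1_vanishes_iff ha hd, t1_vanishes_iff ha hd⟩

/-- The addition law projection `s_0` vanishes at some pair of `k`-points of `E`
iff `a` is a square, `s_1` vanishes at some pair iff `d` is a square, and `t_1`
vanishes at some pair iff `a*d` is a square; equivalently, `s_0` (resp. `s_1`,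
`t_1`) is `k`-complete iff `a` (resp. `d`, `a*d`) is a nonsquare. -/
theorem edwards_completeness {k : Type*} [Field k] (a d : k)
    (hchar : (2 : k) ≠ 0) (hns : a * d * (a - d) ≠ 0) :
    ((∃ x0 x1 x2 x3 y0 y1 y2 y3 : k,
        isEdwardsPoint a d x0 x1 x2 x3 ∧ isEdwardsPoint a d y0 y1 y2 y3 ∧
        x0 * y3 + x3 * y0 = 0 ∧ a * x1 * y1 + x2 * y2 = 0) ↔ ∃ r : k, r ^ 2 = a) ∧
    ((∃ x0 x1 x2 x3 y0 y1 y2 y3 : k,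
        isEdwardsPoint a d x0 x1 x2 x3 ∧ isEdwardsPoint a d y0 y1 y2 y3 ∧
        x1 * y2 + x2 * y1 = 0 ∧ d * x0 * y0 + x3 * y3 = 0) ↔ ∃ r : k, r ^ 2 = d) ∧
    ((∃ x0 x1 x2 x3 y0 y1 y2 y3 : k,
        isEdwardsPoint a d x0 x1 x2 x3 ∧ isEdwardsPoint a d y0 y1 y2 y3 ∧
        a * x1 * y1 - x2 * y2 = 0 ∧ d * x0 * y0 - x3 * y3 = 0) ↔ ∃ r : k, r ^ 2 = a * d) :=
  edwards_completeness_general a d hns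
end

section
/- For all k-points P, Q of E, the pairs s_0(P,Q) and s_1(P,Q) are not both equal to (0,0); that is, {s_0, s_1} is a geometrically complete set of addition law projections for the x-coordinate (their exceptional divisors Δ_{T1} + Δ_{−T1} and Δ_{T2} + Δ_{−T2} are disjoint). -/
/-! If the linear forms `s_0`, `s_1` vanish at `(P, Q)`, they give two homogeneous
linear systems in `(x0, x3)` and in `(x1, x2)` whose coefficients are coordinates of `Q`.
Neither `(x0, x3)` nor `(x1, x2)` vanishes at a point of `E`, so both determinants vanish:
`y3² = d y0²` and `y2² = a y1²`. Together with the equations of `E` and `a ≠ d` this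
forces `Q = 0`. -/

theorem mul_eq_mul_of_linear_system {R : Type*} [CommRing R] [NoZeroDivisors R]
    {α β γ δ p q : R} (h₁ : α * p + β * q = 0) (h₂ : γ * p + δ * q = 0)
    (hpq : ¬(p = 0 ∧ q = 0)) : α * δ = β * γ := by
  have hp : p * (α * δ - β * γ) = 0 := by linear_combination δ * h₁ - β * h₂
  have hq : q * (α * δ - β * γ) = 0 := by linear_combination α * h₂ - γ * h₁
  by_contra hdet
  have hdet' : α * δ - β * γ ≠ 0 := sub_ne_zero.mpr hdet
  exact hpq ⟨(mul_eq_zero.mp hp).resolve_right hdet', (mul_eq_zero.mp hq).resolve_right hdet'⟩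

theorem eq_zero_and_eq_zero_of_mul_sq_add_sq {K : Type*} [Field K] {c u v : K} (hc : c ≠ 0)
    (hsum : c * u ^ 2 + v ^ 2 = 0) (hprod : u * v = 0) : u = 0 ∧ v = 0 := by
  rcases mul_eq_zero.mp hprod with hu | hv
  · subst hu
    exact ⟨rfl, pow_eq_zero_iff two_ne_zero |>.mp (by simpa using hsum)⟩
  · subst hv
    exact ⟨pow_eq_zero_iff two_ne_zero |>.mp (by simpa [hc] using hsum), rfl⟩

namespace isEdwardsPoint

variable {k : Type*} [Field k] {a d x0 x1 x2 x3 : k}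

theorem x0_x3_ne_zero (hP : isEdwardsPoint a d x0 x1 x2 x3) (ha : a ≠ 0) :
    ¬(x0 = 0 ∧ x3 = 0) := by
  rintro ⟨rfl, rfl⟩
  obtain ⟨hnz, hcurve, hprod⟩ := hP
  obtain ⟨rfl, rfl⟩ := eq_zero_and_eq_zero_of_mul_sq_add_sq (u := x1) (v := x2) ha
    (by linear_combination -hcurve) (by linear_combination -hprod)
  exact hnz ⟨rfl, rfl, rfl, rfl⟩

theorem x1_x2_ne_zero (hP : isEdwardsPoint a d x0 x1 x2 x3) (hd : d ≠ 0) :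
    ¬(x1 = 0 ∧ x2 = 0) := by
  rintro ⟨rfl, rfl⟩
  obtain ⟨hnz, hcurve, hprod⟩ := hP
  obtain ⟨rfl, rfl⟩ := eq_zero_and_eq_zero_of_mul_sq_add_sq (u := x0) (v := x3) hd
    (by linear_combination hcurve) (by linear_combination hprod)
  exact hnz ⟨rfl, rfl, rfl, rfl⟩

theorem false_of_sq_eq_of_sq_eq (hP : isEdwardsPoint a d x0 x1 x2 x3) (h2 : (2 : k) ≠ 0)
    (ha : a ≠ 0) (hd : d ≠ 0) (had : a - d ≠ 0) (h03 : x3 ^ 2 = d * x0 ^ 2) (h12 : x2 ^ 2 = a * x1 ^ 2) :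
    False := by
  obtain ⟨hnz, hcurve, hprod⟩ := hP
  have hda : d * x0 ^ 2 = a * x1 ^ 2 :=
    mul_left_cancel₀ h2 (by linear_combination hcurve - h03 + h12)
  -- Squaring `x0 x3 = x1 x2` gives `x0² · d x0² = x1² · d x0²`.
  have ht : d * x0 ^ 2 = 0 := by
    by_contra ht
    have hsq : x0 ^ 2 = x1 ^ 2 := mul_right_cancel₀ ht <| by
      linear_combination (x0 * x3 + x1 * x2) * hprod - x0 ^ 2 * h03 + x1 ^ 2 * h12 - x1 ^ 2 * hda
    have : (a - d) * x0 ^ 2 = 0 := by linear_combination -hda + a * hsq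
    exact ht (by simp [(mul_eq_zero.mp this).resolve_left had])
  have hx0 : x0 = 0 := by simpa [hd] using ht
  have hx1 : x1 = 0 := by simpa [ha] using hda.symm.trans ht
  have hx3 : x3 = 0 := pow_eq_zero_iff two_ne_zero |>.mp (h03.trans ht)
  have hx2 : x2 = 0 := pow_eq_zero_iff two_ne_zero |>.mp (by simp [h12, hx1])
  exact hnz ⟨hx0, hx1, hx2, hx3⟩

end isEdwardsPoint

/-- The addition law projections `s_0` and `s_1` for the `x`-coordinate never
vanish simultaneously at a pair of points of `E`: `{s_0, s_1}` is a
geometrically complete set of addition law projections. -/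
theorem edwards_s0_s1_complete {k : Type*} [Field k] (a d : k)
    (hchar : (2 : k) ≠ 0) (hns : a * d * (a - d) ≠ 0)
    (x0 x1 x2 x3 y0 y1 y2 y3 : k)
    (hP : isEdwardsPoint a d x0 x1 x2 x3)
    (hQ : isEdwardsPoint a d y0 y1 y2 y3) :
    ¬((x0 * y3 + x3 * y0 = 0 ∧ a * x1 * y1 + x2 * y2 = 0) ∧
      (x1 * y2 + x2 * y1 = 0 ∧ d * x0 * y0 + x3 * y3 = 0)) := by
  rintro ⟨⟨h03, h12⟩, h12', h03'⟩
  have ha : a ≠ 0 := left_ne_zero_of_mul (left_ne_zero_of_mul hns)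
  have hd : d ≠ 0 := right_ne_zero_of_mul (left_ne_zero_of_mul hns)
  have had : a - d ≠ 0 := right_ne_zero_of_mul hns
  have hdet03 : y3 * y3 = y0 * (d * y0) :=
    mul_eq_mul_of_linear_system (by linear_combination h03) (by linear_combination h03')
      (hP.x0_x3_ne_zero ha)
  have hdet12 : y2 * y2 = y1 * (a * y1) :=
    mul_eq_mul_of_linear_system (by linear_combination h12') (by linear_combination h12)
      (hP.x1_x2_ne_zero hd)
  exact hQ.false_of_sq_eq_of_sq_eq hchar ha hd had (by linear_combination hdet03)
    (by linear_combination hdet12)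
end

section
/- For each pair (i,j) ∈ {0,1} × {0,1} and all k-points P, Q of E, writing s_i(P,Q) = (u, v) and t_j(P,Q) = (w, z), the Segre product 4-tuple (u*w, u*z, v*w, v*z) again satisfies the two quadric equations of E, i.e. d*(uw)^2 + (vz)^2 = a*(uz)^2 + (vw)^2 and (uw)*(vz) = (uz)*(vw). In particular the four composites φ(s_i, t_j) of the Segre embedding φ: P^1 × P^1 → P^3 with the addition law projections are bidegree (2,2) addition laws for E. -/
/-- The two `x`-coordinate addition law projections `s_0, s_1` indexed by `Fin 2`. -/
def edwardsS {k : Type*} [Field k] (a d : k) (i : Fin 2) (x0 x1 x2 x3 y0 y1 y2 y3 : k) :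
    k × k :=
  ![(x0 * y3 + x3 * y0, a * x1 * y1 + x2 * y2),
    (x1 * y2 + x2 * y1, d * x0 * y0 + x3 * y3)] i

/-- The two `y`-coordinate addition law projections `t_0, t_1` indexed by `Fin 2`. -/
def edwardsT {k : Type*} [Field k] (a d : k) (j : Fin 2) (x0 x1 x2 x3 y0 y1 y2 y3 : k) :
    k × k :=
  ![(x0 * y3 - x3 * y0, x1 * y2 - x2 * y1),
    (a * x1 * y1 - x2 * y2, d * x0 * y0 - x3 * y3)] j

theorem quadric_segre_of_norm_eq {R : Type*} [CommRing R] {a d c u v w₀ z₀ w₁ z₁ : R}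
    (hd : v ^ 2 - d * u ^ 2 = z₁ ^ 2 - c * z₀ ^ 2) (ha : v ^ 2 - a * u ^ 2 = w₁ ^ 2 - c * w₀ ^ 2)
    (hwz : w₀ * z₁ = w₁ * z₀) :
    d * (u * w₀) ^ 2 + (v * z₀) ^ 2 = a * (u * z₀) ^ 2 + (v * w₀) ^ 2 ∧
      d * (u * w₁) ^ 2 + (v * z₁) ^ 2 = a * (u * z₁) ^ 2 + (v * w₁) ^ 2 :=
  ⟨by linear_combination -w₀ ^ 2 * hd + z₀ ^ 2 * ha - (w₀ * z₁ + w₁ * z₀) * hwz,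
    by linear_combination -w₁ ^ 2 * hd + z₁ ^ 2 * ha - c * (w₀ * z₁ + w₁ * z₀) * hwz⟩

section EdwardsIdentities

variable {R : Type*} [CommRing R] {a d x0 x1 x2 x3 y0 y1 y2 y3 : R}

theorem edwards_t_cross_eq (hP₁ : d * x0 ^ 2 + x3 ^ 2 = a * x1 ^ 2 + x2 ^ 2)
    (hP₂ : x0 * x3 = x1 * x2) (hQ₁ : d * y0 ^ 2 + y3 ^ 2 = a * y1 ^ 2 + y2 ^ 2)
    (hQ₂ : y0 * y3 = y1 * y2) :
    (x0 * y3 - x3 * y0) * (d * x0 * y0 - x3 * y3) =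
      (a * x1 * y1 - x2 * y2) * (x1 * y2 - x2 * y1) := by
  linear_combination y1 * y2 * hP₁ - (d * y0 ^ 2 + y3 ^ 2) * hP₂ - x1 * x2 * hQ₁ +
    (d * x0 ^ 2 + x3 ^ 2) * hQ₂

theorem edwards_s₀_norm_d (hP : d * x0 ^ 2 + x3 ^ 2 = a * x1 ^ 2 + x2 ^ 2)
    (hQ : d * y0 ^ 2 + y3 ^ 2 = a * y1 ^ 2 + y2 ^ 2) :
    (a * x1 * y1 + x2 * y2) ^ 2 - d * (x0 * y3 + x3 * y0) ^ 2 =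
      (d * x0 * y0 - x3 * y3) ^ 2 - a * (x1 * y2 - x2 * y1) ^ 2 := by
  linear_combination -(a * y1 ^ 2 + y2 ^ 2) * hP - (d * x0 ^ 2 + x3 ^ 2) * hQ

theorem edwards_s₀_norm_a (hP : x0 * x3 = x1 * x2) (hQ : y0 * y3 = y1 * y2) :
    (a * x1 * y1 + x2 * y2) ^ 2 - a * (x0 * y3 + x3 * y0) ^ 2 =
      (a * x1 * y1 - x2 * y2) ^ 2 - a * (x0 * y3 - x3 * y0) ^ 2 := by
  linear_combination -4 * a * y0 * y3 * hP - 4 * a * x1 * x2 * hQ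

theorem edwards_s₁_norm_d (hP : x0 * x3 = x1 * x2) (hQ : y0 * y3 = y1 * y2) :
    (d * x0 * y0 + x3 * y3) ^ 2 - d * (x1 * y2 + x2 * y1) ^ 2 =
      (d * x0 * y0 - x3 * y3) ^ 2 - d * (x1 * y2 - x2 * y1) ^ 2 := by
  linear_combination 4 * d * y0 * y3 * hP + 4 * d * x1 * x2 * hQ

theorem edwards_s₁_norm_a (hP : d * x0 ^ 2 + x3 ^ 2 = a * x1 ^ 2 + x2 ^ 2)
    (hQ : d * y0 ^ 2 + y3 ^ 2 = a * y1 ^ 2 + y2 ^ 2) :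
    (d * x0 * y0 + x3 * y3) ^ 2 - a * (x1 * y2 + x2 * y1) ^ 2 =
      (a * x1 * y1 - x2 * y2) ^ 2 - d * (x0 * y3 - x3 * y0) ^ 2 := by
  linear_combination (a * y1 ^ 2 + y2 ^ 2) * hP + (d * x0 ^ 2 + x3 ^ 2) * hQ

end EdwardsIdentities

theorem edwards_segre_laws_on_curve_general {k : Type*} [Field k] (a d : k)
    (x0 x1 x2 x3 y0 y1 y2 y3 : k)
    (hP : isEdwardsPoint a d x0 x1 x2 x3)
    (hQ : isEdwardsPoint a d y0 y1 y2 y3) :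
    ∀ i j : Fin 2,
      (d * ((edwardsS a d i x0 x1 x2 x3 y0 y1 y2 y3).1 *
              (edwardsT a d j x0 x1 x2 x3 y0 y1 y2 y3).1) ^ 2 +
          ((edwardsS a d i x0 x1 x2 x3 y0 y1 y2 y3).2 *
              (edwardsT a d j x0 x1 x2 x3 y0 y1 y2 y3).2) ^ 2 =
        a * ((edwardsS a d i x0 x1 x2 x3 y0 y1 y2 y3).1 *
              (edwardsT a d j x0 x1 x2 x3 y0 y1 y2 y3).2) ^ 2 +
          ((edwardsS a d i x0 x1 x2 x3 y0 y1 y2 y3).2 *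
              (edwardsT a d j x0 x1 x2 x3 y0 y1 y2 y3).1) ^ 2) ∧
      ((edwardsS a d i x0 x1 x2 x3 y0 y1 y2 y3).1 *
            (edwardsT a d j x0 x1 x2 x3 y0 y1 y2 y3).1) *
          ((edwardsS a d i x0 x1 x2 x3 y0 y1 y2 y3).2 *
            (edwardsT a d j x0 x1 x2 x3 y0 y1 y2 y3).2) =
        ((edwardsS a d i x0 x1 x2 x3 y0 y1 y2 y3).1 *
            (edwardsT a d j x0 x1 x2 x3 y0 y1 y2 y3).2) *
          ((edwardsS a d i x0 x1 x2 x3 y0 y1 y2 y3).2 *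
            (edwardsT a d j x0 x1 x2 x3 y0 y1 y2 y3).1) := by
  obtain ⟨-, hP₁, hP₂⟩ := hP
  obtain ⟨-, hQ₁, hQ₂⟩ := hQ
  have ht := edwards_t_cross_eq hP₁ hP₂ hQ₁ hQ₂
  have h₀ := quadric_segre_of_norm_eq (edwards_s₀_norm_d hP₁ hQ₁) (edwards_s₀_norm_a hP₂ hQ₂) ht
  have h₁ := quadric_segre_of_norm_eq (edwards_s₁_norm_d hP₂ hQ₂) (edwards_s₁_norm_a hP₁ hQ₁) ht
  intro i j
  refine ⟨?_, by ring⟩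
  fin_cases i <;> fin_cases j
  exacts [h₀.1, h₀.2, h₁.1, h₁.2]

/-- For each pair `(i,j)`, the Segre product of `s_i(P,Q)` and `t_j(P,Q)` again
satisfies the two quadric equations of `E`: the composites `φ(s_i, t_j)` are
bidegree (2,2) addition laws for `E`. -/
theorem edwards_segre_laws_on_curve {k : Type*} [Field k] (a d : k)
    (hchar : (2 : k) ≠ 0) (hns : a * d * (a - d) ≠ 0)
    (x0 x1 x2 x3 y0 y1 y2 y3 : k)
    (hP : isEdwardsPoint a d x0 x1 x2 x3)
    (hQ : isEdwardsPoint a d y0 y1 y2 y3) :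
    ∀ i j : Fin 2,
      (d * ((edwardsS a d i x0 x1 x2 x3 y0 y1 y2 y3).1 *
              (edwardsT a d j x0 x1 x2 x3 y0 y1 y2 y3).1) ^ 2 +
          ((edwardsS a d i x0 x1 x2 x3 y0 y1 y2 y3).2 *
              (edwardsT a d j x0 x1 x2 x3 y0 y1 y2 y3).2) ^ 2 =
        a * ((edwardsS a d i x0 x1 x2 x3 y0 y1 y2 y3).1 *
              (edwardsT a d j x0 x1 x2 x3 y0 y1 y2 y3).2) ^ 2 +
          ((edwardsS a d i x0 x1 x2 x3 y0 y1 y2 y3).2 *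
              (edwardsT a d j x0 x1 x2 x3 y0 y1 y2 y3).1) ^ 2) ∧
      ((edwardsS a d i x0 x1 x2 x3 y0 y1 y2 y3).1 *
            (edwardsT a d j x0 x1 x2 x3 y0 y1 y2 y3).1) *
          ((edwardsS a d i x0 x1 x2 x3 y0 y1 y2 y3).2 *
            (edwardsT a d j x0 x1 x2 x3 y0 y1 y2 y3).2) =
        ((edwardsS a d i x0 x1 x2 x3 y0 y1 y2 y3).1 *
            (edwardsT a d j x0 x1 x2 x3 y0 y1 y2 y3).2) *
          ((edwardsS a d i x0 x1 x2 x3 y0 y1 y2 y3).2 *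
            (edwardsT a d j x0 x1 x2 x3 y0 y1 y2 y3).1) :=
  edwards_segre_laws_on_curve_general a d x0 x1 x2 x3 y0 y1 y2 y3 hP hQ
end

section
/- For all k-points u = (u0,u1,u2,u3,u4) and v = (v0,v1,v2,v3,v4) of the pentagonal elliptic curve E_t, the 5-tuple w = (u0^2*v1*v4 − u1*u4*v0^2, u0*u1*v2*v4 − u2*u4*v0*v1, u0*u2*v3*v4 − u3*u4*v0*v2, u0*u3*v1*v2 − u1*u2*v0*v3, u0*u4*v1*v3 − u1*u3*v0*v4) again satisfies the five quadric equations defining E_t (i.e. the G_1-invariant bidegree (2,2) addition law maps pairs of points of E_t to points of E_t; note w(P, O) = u0 · P). -/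
/-- A `k`-point of the pentagonal elliptic curve `E_t ⊂ P^4`. -/
def isPentPoint {k : Type*} [Field k] (t u0 u1 u2 u3 u4 : k) : Prop :=
  ¬(u0 = 0 ∧ u1 = 0 ∧ u2 = 0 ∧ u3 = 0 ∧ u4 = 0) ∧
  t * u0 ^ 2 + u2 * u3 - u1 * u4 = 0 ∧
  t * u0 * u1 + u2 * u4 - u3 ^ 2 = 0 ∧
  u1 ^ 2 + u0 * u2 - u3 * u4 = 0 ∧
  u1 * u2 + u0 * u3 - u4 ^ 2 = 0 ∧
  u2 ^ 2 - u1 * u3 + t * u0 * u4 = 0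

/-- The five defining quadrics of `E_t`, as a predicate on a (not necessarily
nonzero) 5-tuple. -/
def pentEqs {k : Type*} [Field k] (t w0 w1 w2 w3 w4 : k) : Prop :=
  t * w0 ^ 2 + w2 * w3 - w1 * w4 = 0 ∧
  t * w0 * w1 + w2 * w4 - w3 ^ 2 = 0 ∧
  w1 ^ 2 + w0 * w2 - w3 * w4 = 0 ∧
  w1 * w2 + w0 * w3 - w4 ^ 2 = 0 ∧
  w2 ^ 2 - w1 * w3 + t * w0 * w4 = 0

/-!
Write `[a, b]` for the minor `a(u) b(v) - b(u) a(v)` of the values of two quadratic forms at the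
points `u` and `v`. The addition law is
`w = ([U0², U1U4], [U0U1, U2U4], [U0U2, U3U4], [U0U3, U1U2], [U0U4, U1U3])`,
and each quadric of `E_t` evaluated at `w` is, identically in `t`, `u` and `v`, a sum of two or
three products `[a, b] * [f, m]` with `f` a quadric of `E_t` and `m` a monomial. Each factor
`[f, m] = f(u) m(v) - m(u) f(v)` vanishes once `f(u) = f(v) = 0`.
-/

/-- `pentEqs` over an arbitrary commutative ring. -/
def PentQuadrics {R : Type*} [CommRing R] (t u0 u1 u2 u3 u4 : R) : Prop :=
  t * u0 ^ 2 + u2 * u3 - u1 * u4 = 0 ∧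
  t * u0 * u1 + u2 * u4 - u3 ^ 2 = 0 ∧
  u1 ^ 2 + u0 * u2 - u3 * u4 = 0 ∧
  u1 * u2 + u0 * u3 - u4 ^ 2 = 0 ∧
  u2 ^ 2 - u1 * u3 + t * u0 * u4 = 0

theorem PentQuadrics.addLaw {R : Type*} [CommRing R] {t u0 u1 u2 u3 u4 v0 v1 v2 v3 v4 : R}
    (hu : PentQuadrics t u0 u1 u2 u3 u4) (hv : PentQuadrics t v0 v1 v2 v3 v4) :
    PentQuadrics t
      (u0 ^ 2 * v1 * v4 - u1 * u4 * v0 ^ 2)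
      (u0 * u1 * v2 * v4 - u2 * u4 * v0 * v1)
      (u0 * u2 * v3 * v4 - u3 * u4 * v0 * v2)
      (u0 * u3 * v1 * v2 - u1 * u2 * v0 * v3)
      (u0 * u4 * v1 * v3 - u1 * u3 * v0 * v4) := by
  obtain ⟨hu₁, hu₂, hu₃, hu₄, hu₅⟩ := hu
  obtain ⟨hv₁, hv₂, hv₃, hv₄, hv₅⟩ := hv
  refine ⟨?_, ?_, ?_, ?_, ?_⟩
  · linear_combination
      (u0 ^ 2 * v1 * v4 - u1 * u4 * v0 ^ 2) * (v1 * v4 * hu₁ - u1 * u4 * hv₁)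
      - (u0 * u2 * v3 * v4 - u3 * u4 * v0 * v2) * (v0 * v3 * hu₄ - u0 * u3 * hv₄)
      + (u0 * u3 * v4 ^ 2 - u4 ^ 2 * v0 * v3) * (v0 * v2 * hu₃ - u0 * u2 * hv₃)
  · linear_combination
      (u0 ^ 2 * v1 * v4 - u1 * u4 * v0 ^ 2) * (v2 * v4 * hu₂ - u2 * u4 * hv₂)
      + (u0 * u3 * v1 * v2 - u1 * u2 * v0 * v3) * (v0 * v3 * hu₄ - u0 * u3 * hv₄)
  · linear_combination
      -(u0 * u1 * v2 * v4 - u2 * u4 * v0 * v1) * (v0 * v1 * hu₂ - u0 * u1 * hv₂)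
      + (u0 ^ 2 * v1 * v4 - u1 * u4 * v0 ^ 2) * (v3 * v4 * hu₃ - u3 * u4 * hv₃)
      - (u1 ^ 2 * v3 * v4 - u3 * u4 * v1 ^ 2) * (v0 ^ 2 * hu₁ - u0 ^ 2 * hv₁)
  · linear_combination
      -(u0 * u4 * v1 * v3 - u1 * u3 * v0 * v4) * (v0 * v4 * hu₅ - u0 * u4 * hv₅)
      + (u0 ^ 2 * v1 * v4 - u1 * u4 * v0 ^ 2) * (v1 * v2 * hu₄ - u1 * u2 * hv₄)
      - (u1 * u2 * v4 ^ 2 - u4 ^ 2 * v1 * v2) * (v0 ^ 2 * hu₁ - u0 ^ 2 * hv₁)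
  · linear_combination
      (u0 ^ 2 * v1 * v4 - u1 * u4 * v0 ^ 2) * (v1 * v3 * hu₅ - u1 * u3 * hv₅)
      + (u0 * u2 * v3 * v4 - u3 * u4 * v0 * v2) * (v0 * v2 * hu₃ - u0 * u2 * hv₃)

theorem pentagonal_addition_law_on_curve_general {k : Type*} [Field k] (t : k)
    (u0 u1 u2 u3 u4 v0 v1 v2 v3 v4 : k)
    (hu : isPentPoint t u0 u1 u2 u3 u4)
    (hv : isPentPoint t v0 v1 v2 v3 v4) :
    pentEqs t
      (u0 ^ 2 * v1 * v4 - u1 * u4 * v0 ^ 2)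
      (u0 * u1 * v2 * v4 - u2 * u4 * v0 * v1)
      (u0 * u2 * v3 * v4 - u3 * u4 * v0 * v2)
      (u0 * u3 * v1 * v2 - u1 * u2 * v0 * v3)
      (u0 * u4 * v1 * v3 - u1 * u3 * v0 * v4) :=
  PentQuadrics.addLaw hu.2 hv.2

/-- The `G_1`-invariant bidegree (2,2) addition law maps pairs of points of the
pentagonal elliptic curve `E_t` to tuples satisfying the five quadrics of `E_t`. -/
theorem pentagonal_addition_law_on_curve {k : Type*} [Field k] (t : k)
    (hns : t * (t ^ 2 - 11 * t - 1) ≠ 0)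
    (u0 u1 u2 u3 u4 v0 v1 v2 v3 v4 : k)
    (hu : isPentPoint t u0 u1 u2 u3 u4)
    (hv : isPentPoint t v0 v1 v2 v3 v4) :
    pentEqs t
      (u0 ^ 2 * v1 * v4 - u1 * u4 * v0 ^ 2)
      (u0 * u1 * v2 * v4 - u2 * u4 * v0 * v1)
      (u0 * u2 * v3 * v4 - u3 * u4 * v0 * v2)
      (u0 * u3 * v1 * v2 - u1 * u2 * v0 * v3)
      (u0 * u4 * v1 * v3 - u1 * u3 * v0 * v4) :=
  pentagonal_addition_law_on_curve_general t u0 u1 u2 u3 u4 v0 v1 v2 v3 v4 hu hv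
end

section
/- For all k-points P = (x0,x1,x2,x3) and Q = (y0,y1,y2,y3) of the canonical curve C of level 4, each of the following four 4-tuples again satisfies the two defining equations of C: S_0 = (x3^2*y1^2 − x1^2*y3^2, 4*(x0*x3*y1*y2 − x1*x2*y0*y3), 4*(x0^2*y2^2 − x2^2*y0^2), 4*(x0*x1*y2*y3 − x2*x3*y0*y1)); S_1 = (x0*x1*y0*y3 + d*x2*x3*y1*y2, 4d*x0*x2*y2^2 + x1^2*y1*y3, x0*x3*y2*y3 + x1*x2*y0*y1, x1*x3*y3^2 − 4d*x2^2*y0*y2); S_2 = (4*(x0^2*y0^2 − d^2*x2^2*y2^2), 4*(x0*x1*y0*y1 − d*x2*x3*y2*y3), x1^2*y1^2 − x3^2*y3^2, 4*(x0*x3*y0*y3 − d*x1*x2*y1*y2)); S_3 = (x0*x3*y0*y1 + d*x1*x2*y2*y3, x1*x3*y1^2 + 4d*x2^2*y0*y2, x0*x1*y1*y2 + x2*x3*y0*y3, −4d*x0*x2*y2^2 + x3^2*y1*y3). (These are, up to scalar, the four bidegree (2,2) addition laws of the canonical curve of level 4.) -/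
/-!
Write `a, b, Y, Z` for squares of coordinates. Once the equations of `P` and `Q` are used to
replace the products `x₁x₃`, `4x₀x₂`, `y₁y₃`, `4y₀y₂` by the differences of squares they equal,
each nontrivial equation becomes a combination of two expressions
`t (aY - bZ)² - (a - tb)(tY - Z)(aY + bZ)`, and the identity
`t (aY - bZ)² - (a - tb)(tY - Z)(aY + bZ) = YZ (a - tb)² + ab (tY - Z)²`
turns both into the same quantity. For `S₁` the first equation is instead a norm identity:
`z₁` and `z₃` are the norms of `x₁y₀ + √d x₃y₂` and `x₀y₃ + √d x₂y₁`, whose product is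
`z₀ + √d z₂`. `S₃` is `S₁` with the two points exchanged, and the second equations of `S₀` and
`S₂` hold identically.
-/

/-- The two defining equations of the canonical curve `C ⊂ P^3` of level 4:
`X0^2 - d*X2^2 = X1*X3` and `X1^2 - X3^2 = 4*X0*X2`. -/
def onCanonical4 {k : Type*} [Field k] (d z0 z1 z2 z3 : k) : Prop :=
  z0 ^ 2 - d * z2 ^ 2 = z1 * z3 ∧ z1 ^ 2 - z3 ^ 2 = 4 * z0 * z2

namespace Canonical4

variable {R : Type*} [CommRing R]

theorem mul_sq_sub_mul_mul_add_eq {t a b Y Z m n : R} (hm : a - t * b = m) (hn : t * Y - Z = n) :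
    t * (a * Y - b * Z) ^ 2 - m * n * (a * Y + b * Z) = Y * Z * m ^ 2 + a * b * n ^ 2 := by
  subst hm hn
  ring

variable {d x0 x1 x2 x3 y0 y1 y2 y3 : R}

theorem addLaw0_first_eq (hx1 : x0 ^ 2 - d * x2 ^ 2 = x1 * x3)
    (hx2 : x1 ^ 2 - x3 ^ 2 = 4 * x0 * x2) (hy1 : y0 ^ 2 - d * y2 ^ 2 = y1 * y3)
    (hy2 : y1 ^ 2 - y3 ^ 2 = 4 * y0 * y2) :
    (x3 ^ 2 * y1 ^ 2 - x1 ^ 2 * y3 ^ 2) ^ 2 - d * (4 * (x0 ^ 2 * y2 ^ 2 - x2 ^ 2 * y0 ^ 2)) ^ 2 =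
      4 * (x0 * x3 * y1 * y2 - x1 * x2 * y0 * y3) *
        (4 * (x0 * x1 * y2 * y3 - x2 * x3 * y0 * y1)) := by
  have h02 := mul_sq_sub_mul_mul_add_eq (t := 1) (a := x1 ^ 2) (b := x3 ^ 2) (Y := y3 ^ 2)
    (Z := y1 ^ 2) (m := 4 * x0 * x2) (n := -(4 * y0 * y2)) (by linear_combination hx2)
    (by linear_combination -hy2)
  have h13 := mul_sq_sub_mul_mul_add_eq (Y := y2 ^ 2) (Z := y0 ^ 2) (n := -(y1 * y3)) hx1
    (by linear_combination -hy1)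
  linear_combination h02 - 16 * h13

theorem addLaw1_coord1_eq (hx2 : x1 ^ 2 - x3 ^ 2 = 4 * x0 * x2)
    (hy1 : y0 ^ 2 - d * y2 ^ 2 = y1 * y3) :
    4 * d * x0 * x2 * y2 ^ 2 + x1 ^ 2 * y1 * y3 = x1 ^ 2 * y0 ^ 2 - d * x3 ^ 2 * y2 ^ 2 := by
  linear_combination -d * y2 ^ 2 * hx2 - x1 ^ 2 * hy1

theorem addLaw1_coord3_eq (hx1 : x0 ^ 2 - d * x2 ^ 2 = x1 * x3)
    (hy2 : y1 ^ 2 - y3 ^ 2 = 4 * y0 * y2) :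
    x1 * x3 * y3 ^ 2 - 4 * d * x2 ^ 2 * y0 * y2 = x0 ^ 2 * y3 ^ 2 - d * x2 ^ 2 * y1 ^ 2 := by
  linear_combination -y3 ^ 2 * hx1 + d * x2 ^ 2 * hy2

theorem addLaw1_first_eq (hx1 : x0 ^ 2 - d * x2 ^ 2 = x1 * x3)
    (hx2 : x1 ^ 2 - x3 ^ 2 = 4 * x0 * x2) (hy1 : y0 ^ 2 - d * y2 ^ 2 = y1 * y3)
    (hy2 : y1 ^ 2 - y3 ^ 2 = 4 * y0 * y2) :
    (x0 * x1 * y0 * y3 + d * x2 * x3 * y1 * y2) ^ 2 -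
        d * (x0 * x3 * y2 * y3 + x1 * x2 * y0 * y1) ^ 2 =
      (4 * d * x0 * x2 * y2 ^ 2 + x1 ^ 2 * y1 * y3) *
        (x1 * x3 * y3 ^ 2 - 4 * d * x2 ^ 2 * y0 * y2) := by
  rw [addLaw1_coord1_eq hx2 hy1, addLaw1_coord3_eq hx1 hy2]
  linear_combination (sq_add_mul_sq_mul_sq_add_mul_sq (n := -d) (x₁ := x1 * y0) (x₂ := x3 * y2)
    (y₁ := x0 * y3) (y₂ := x2 * y1)).symm

theorem addLaw1_second_eq (hx1 : x0 ^ 2 - d * x2 ^ 2 = x1 * x3)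
    (hx2 : x1 ^ 2 - x3 ^ 2 = 4 * x0 * x2) (hy1 : y0 ^ 2 - d * y2 ^ 2 = y1 * y3)
    (hy2 : y1 ^ 2 - y3 ^ 2 = 4 * y0 * y2) :
    (4 * d * x0 * x2 * y2 ^ 2 + x1 ^ 2 * y1 * y3) ^ 2 -
        (x1 * x3 * y3 ^ 2 - 4 * d * x2 ^ 2 * y0 * y2) ^ 2 =
      4 * (x0 * x1 * y0 * y3 + d * x2 * x3 * y1 * y2) *
        (x0 * x3 * y2 * y3 + x1 * x2 * y0 * y1) := by
  rw [addLaw1_coord1_eq hx2 hy1, addLaw1_coord3_eq hx1 hy2]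
  have h02 := mul_sq_sub_mul_mul_add_eq (t := 1) (a := x1 ^ 2) (b := x3 ^ 2) (Y := y0 ^ 2)
    (Z := d * y2 ^ 2) (m := 4 * x0 * x2) (n := y1 * y3) (by linear_combination hx2)
    (by linear_combination hy1)
  have h13 := mul_sq_sub_mul_mul_add_eq (t := 1) (a := x0 ^ 2) (b := d * x2 ^ 2) (Y := y3 ^ 2)
    (Z := y1 ^ 2) (m := x1 * x3) (n := -(4 * y0 * y2)) (by linear_combination hx1)
    (by linear_combination -hy2)
  linear_combination h02 - h13

theorem addLaw2_first_eq (hx1 : x0 ^ 2 - d * x2 ^ 2 = x1 * x3)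
    (hx2 : x1 ^ 2 - x3 ^ 2 = 4 * x0 * x2) (hy1 : y0 ^ 2 - d * y2 ^ 2 = y1 * y3)
    (hy2 : y1 ^ 2 - y3 ^ 2 = 4 * y0 * y2) :
    (4 * (x0 ^ 2 * y0 ^ 2 - d ^ 2 * x2 ^ 2 * y2 ^ 2)) ^ 2 -
        d * (x1 ^ 2 * y1 ^ 2 - x3 ^ 2 * y3 ^ 2) ^ 2 =
      4 * (x0 * x1 * y0 * y1 - d * x2 * x3 * y2 * y3) *
        (4 * (x0 * x3 * y0 * y3 - d * x1 * x2 * y1 * y2)) := by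
  have h13 := mul_sq_sub_mul_mul_add_eq (t := 1) (a := x0 ^ 2) (b := d * x2 ^ 2) (Y := y0 ^ 2)
    (Z := d * y2 ^ 2) (m := x1 * x3) (n := y1 * y3) (by linear_combination hx1)
    (by linear_combination hy1)
  have h02 := mul_sq_sub_mul_mul_add_eq (t := 1) (a := x1 ^ 2) (b := x3 ^ 2) (Y := y1 ^ 2)
    (Z := y3 ^ 2) (m := 4 * x0 * x2) (n := 4 * y0 * y2) (by linear_combination hx2)
    (by linear_combination hy2)
  linear_combination 16 * h13 - d * h02

end Canonical4

theorem canonical4_addition_laws_on_curve_general {k : Type*} [Field k] (d : k)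
    (x0 x1 x2 x3 y0 y1 y2 y3 : k)
    (hP : onCanonical4 d x0 x1 x2 x3)
    (hQ : onCanonical4 d y0 y1 y2 y3) :
    onCanonical4 d
      (x3 ^ 2 * y1 ^ 2 - x1 ^ 2 * y3 ^ 2)
      (4 * (x0 * x3 * y1 * y2 - x1 * x2 * y0 * y3))
      (4 * (x0 ^ 2 * y2 ^ 2 - x2 ^ 2 * y0 ^ 2))
      (4 * (x0 * x1 * y2 * y3 - x2 * x3 * y0 * y1)) ∧
    onCanonical4 d
      (x0 * x1 * y0 * y3 + d * x2 * x3 * y1 * y2)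
      (4 * d * x0 * x2 * y2 ^ 2 + x1 ^ 2 * y1 * y3)
      (x0 * x3 * y2 * y3 + x1 * x2 * y0 * y1)
      (x1 * x3 * y3 ^ 2 - 4 * d * x2 ^ 2 * y0 * y2) ∧
    onCanonical4 d
      (4 * (x0 ^ 2 * y0 ^ 2 - d ^ 2 * x2 ^ 2 * y2 ^ 2))
      (4 * (x0 * x1 * y0 * y1 - d * x2 * x3 * y2 * y3))
      (x1 ^ 2 * y1 ^ 2 - x3 ^ 2 * y3 ^ 2)
      (4 * (x0 * x3 * y0 * y3 - d * x1 * x2 * y1 * y2)) ∧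
    onCanonical4 d
      (x0 * x3 * y0 * y1 + d * x1 * x2 * y2 * y3)
      (x1 * x3 * y1 ^ 2 + 4 * d * x2 ^ 2 * y0 * y2)
      (x0 * x1 * y1 * y2 + x2 * x3 * y0 * y3)
      (-(4 * d * x0 * x2 * y2 ^ 2) + x3 ^ 2 * y1 * y3) := by
  obtain ⟨hx1, hx2⟩ := hP
  obtain ⟨hy1, hy2⟩ := hQ
  refine ⟨⟨Canonical4.addLaw0_first_eq hx1 hx2 hy1 hy2, by ring⟩,
    ⟨Canonical4.addLaw1_first_eq hx1 hx2 hy1 hy2, Canonical4.addLaw1_second_eq hx1 hx2 hy1 hy2⟩,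
    ⟨Canonical4.addLaw2_first_eq hx1 hx2 hy1 hy2, by ring⟩, ⟨?_, ?_⟩⟩
  · linear_combination Canonical4.addLaw1_first_eq hy1 hy2 hx1 hx2
  · linear_combination Canonical4.addLaw1_second_eq hy1 hy2 hx1 hx2

/-- The four (scaled) bidegree (2,2) addition laws of the canonical curve of
level 4 map pairs of points of `C` to tuples satisfying its two equations. -/
theorem canonical4_addition_laws_on_curve {k : Type*} [Field k] (d : k)
    (hchar : (2 : k) ≠ 0) (hns : d * (d + 1) ≠ 0)
    (x0 x1 x2 x3 y0 y1 y2 y3 : k)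
    (hP0 : ¬(x0 = 0 ∧ x1 = 0 ∧ x2 = 0 ∧ x3 = 0))
    (hP : onCanonical4 d x0 x1 x2 x3)
    (hQ0 : ¬(y0 = 0 ∧ y1 = 0 ∧ y2 = 0 ∧ y3 = 0))
    (hQ : onCanonical4 d y0 y1 y2 y3) :
    onCanonical4 d
      (x3 ^ 2 * y1 ^ 2 - x1 ^ 2 * y3 ^ 2)
      (4 * (x0 * x3 * y1 * y2 - x1 * x2 * y0 * y3))
      (4 * (x0 ^ 2 * y2 ^ 2 - x2 ^ 2 * y0 ^ 2))
      (4 * (x0 * x1 * y2 * y3 - x2 * x3 * y0 * y1)) ∧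
    onCanonical4 d
      (x0 * x1 * y0 * y3 + d * x2 * x3 * y1 * y2)
      (4 * d * x0 * x2 * y2 ^ 2 + x1 ^ 2 * y1 * y3)
      (x0 * x3 * y2 * y3 + x1 * x2 * y0 * y1)
      (x1 * x3 * y3 ^ 2 - 4 * d * x2 ^ 2 * y0 * y2) ∧
    onCanonical4 d
      (4 * (x0 ^ 2 * y0 ^ 2 - d ^ 2 * x2 ^ 2 * y2 ^ 2))
      (4 * (x0 * x1 * y0 * y1 - d * x2 * x3 * y2 * y3))
      (x1 ^ 2 * y1 ^ 2 - x3 ^ 2 * y3 ^ 2)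
      (4 * (x0 * x3 * y0 * y3 - d * x1 * x2 * y1 * y2)) ∧
    onCanonical4 d
      (x0 * x3 * y0 * y1 + d * x1 * x2 * y2 * y3)
      (x1 * x3 * y1 ^ 2 + 4 * d * x2 ^ 2 * y0 * y2)
      (x0 * x1 * y1 * y2 + x2 * x3 * y0 * y3)
      (-(4 * d * x0 * x2 * y2 ^ 2) + x3 ^ 2 * y1 * y3) :=
  canonical4_addition_laws_on_curve_general d x0 x1 x2 x3 y0 y1 y2 y3 hP hQ
end

section
/- Let k be a field and a ∈ k. If (x0,x1,x2,x3) ∈ k^4 satisfies the equations of the projective normal closure of the Jacobi quartic y^2 = x^4 + 2ax^2 + 1, namely x2^2 = x0^2 + 2a*x0*x3 + x3^2 and x0*x3 = x1^2, then (z0,z1,z2,z3) = (x1, x2, x0 − x3, x0 + x3) satisfies the equations of the Jacobi model J_{(a',b')} with a' = −2(a+1), b' = 4, c' = 2(a−1) (so a' + b' + c' = 0): a'*z0^2 + z1^2 = z2^2, b'*z0^2 + z2^2 = z3^2, and c'*z0^2 + z3^2 = z1^2. Hence (X0:X1:X2:X3) ↦ (X1 : X2 : X0 − X3 : X0 + X3)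 defines a projective linear isomorphism from the Jacobi quartic closure to the Jacobi model J_{(−2(a+1),4)}. -/
/-- The linear change of coordinates `(X0:X1:X2:X3) ↦ (X1 : X2 : X0-X3 : X0+X3)`
maps the projective normal closure of the Jacobi quartic
`X2^2 = X0^2 + 2a*X0*X3 + X3^2`, `X0*X3 = X1^2` to the Jacobi model
`J_(a',b')` with `a' = -2*(a+1)`, `b' = 4`, `c' = 2*(a-1)`. -/
theorem jacobi_quartic_to_jacobi_model {k : Type*} [Field k] (a : k)
    (x0 x1 x2 x3 : k)
    (h1 : x2 ^ 2 = x0 ^ 2 + 2 * a * x0 * x3 + x3 ^ 2)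
    (h2 : x0 * x3 = x1 ^ 2) :
    (-(2 * (a + 1)) * x1 ^ 2 + x2 ^ 2 = (x0 - x3) ^ 2) ∧
    (4 * x1 ^ 2 + (x0 - x3) ^ 2 = (x0 + x3) ^ 2) ∧
    (2 * (a - 1) * x1 ^ 2 + (x0 + x3) ^ 2 = x2 ^ 2) := by
  refine ⟨?_, ?_, ?_⟩
  · linear_combination h1 + 2 * (a + 1) * h2
  · linear_combination -4 * h2
  · linear_combination -h1 - 2 * (a - 1) * h2
end

section
/- Let k be a field and a ∈ k, and suppose the polynomial z^2 + 2a*z + 1 has no root in k. Then the only tuple (x0,x1,x2,x3) ∈ k^4 with x2 = 0 satisfying x2^2 = x0^2 + 2a*x0*x3 + x3^2 and x0*x3 = x1^2 is (0,0,0,0). Consequently every k-rational point of the projective normal closure of the Jacobi quartic lies in the affine patch X2 ≠ 0, i.e. that affine model is arithmetically complete (k-complete). -/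
theorem eq_zero_and_eq_zero_of_sq_add_mul_add_sq_eq_zero {k : Type*} [Field k] {b : k}
    (hroot : ∀ z : k, z ^ 2 + b * z + 1 ≠ 0) {x y : k} (hxy : x ^ 2 + b * x * y + y ^ 2 = 0) :
    x = 0 ∧ y = 0 := by
  have hy : y = 0 := by
    by_contra hy
    apply hroot (x / y)
    field_simp
    linear_combination hxy
  subst hy
  exact ⟨pow_eq_zero_iff two_ne_zero |>.mp (by linear_combination hxy), rfl⟩

/-- If `z^2 + 2a*z + 1` has no root in `k`, then the projective normal closure
of the Jacobi quartic `X2^2 = X0^2 + 2a*X0*X3 + X3^2`, `X0*X3 = X1^2` has no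
`k`-rational point with `X2 = 0`: the affine patch `X2 ≠ 0` is arithmetically
complete. -/
theorem jacobi_quartic_patch_complete {k : Type*} [Field k] (a : k)
    (hirr : ∀ z : k, z ^ 2 + 2 * a * z + 1 ≠ 0) :
    ∀ x0 x1 x2 x3 : k, x2 = 0 →
      x2 ^ 2 = x0 ^ 2 + 2 * a * x0 * x3 + x3 ^ 2 →
      x0 * x3 = x1 ^ 2 →
      x0 = 0 ∧ x1 = 0 ∧ x2 = 0 ∧ x3 = 0 := by
  rintro x0 x1 x2 x3 rfl hquad hmul
  obtain ⟨rfl, rfl⟩ := eq_zero_and_eq_zero_of_sq_add_mul_add_sq_eq_zero hirr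
    (x := x0) (y := x3) (by linear_combination -hquad)
  have hx1 : x1 = 0 := pow_eq_zero_iff two_ne_zero |>.mp (by linear_combination -hmul)
  exact ⟨rfl, hx1, rfl, rfl⟩
end

section
/- Let k be a field in which −1 is not a square, and let b ∈ k with c = −1 − b. Then the only tuple (x0,x1,x2,x3) ∈ k^4 with x2 = 0 satisfying the Jacobi model equations x0^2 + x1^2 = x2^2, b*x0^2 + x2^2 = x3^2, c*x0^2 + x3^2 = x1^2 is (0,0,0,0). Consequently the Chudnovsky affine model x^2 + y^2 = 1, λ^2 x^2 + z^2 = 1 (embedded by (x,y,z) ↦ (x:y:1:z) in the Jacobi model with a = 1, b = −λ^2) is arithmetically complete (k-complete) over any field in which −1 is not a square. -/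
theorem eq_zero_and_eq_zero_of_sq_add_sq_eq_zero {k : Type*} [Field k]
    (hsq : ¬∃ r : k, r ^ 2 = -1) {x y : k} (h : x ^ 2 + y ^ 2 = 0) : x = 0 ∧ y = 0 := by
  have hx : x = 0 := by
    by_contra hx_ne
    refine hsq ⟨y / x, ?_⟩
    rw [div_pow, div_eq_iff (pow_ne_zero 2 hx_ne)]
    linear_combination h
  subst hx
  exact ⟨rfl, pow_eq_zero_iff two_ne_zero |>.mp (by linear_combination h)⟩

/-- If `-1` is not a square in `k`, the Jacobi model `J_(1,b)` (with
`c = -1 - b`) has no `k`-rational point with `X2 = 0`: the Chudnovsky affine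
model `x^2 + y^2 = 1`, `λ^2*x^2 + z^2 = 1`, embedded via
`(x,y,z) ↦ (x:y:1:z)`, is arithmetically complete over such a field. -/
theorem chudnovsky_model_complete {k : Type*} [Field k]
    (hsq : ¬∃ r : k, r ^ 2 = -1) (b : k) :
    ∀ x0 x1 x2 x3 : k, x2 = 0 →
      x0 ^ 2 + x1 ^ 2 = x2 ^ 2 →
      b * x0 ^ 2 + x2 ^ 2 = x3 ^ 2 →
      (-1 - b) * x0 ^ 2 + x3 ^ 2 = x1 ^ 2 →
      x0 = 0 ∧ x1 = 0 ∧ x2 = 0 ∧ x3 = 0 := by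
  rintro x0 x1 x2 x3 rfl e1 e2 -
  obtain ⟨rfl, rfl⟩ : x0 = 0 ∧ x1 = 0 :=
    eq_zero_and_eq_zero_of_sq_add_sq_eq_zero hsq (by linear_combination e1)
  exact ⟨rfl, rfl, rfl, pow_eq_zero_iff two_ne_zero |>.mp (by linear_combination -e2)⟩
end
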